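/- arXiv:2105.03808 — 6 statements merged into one kernel-verified Lean document; each statement's English description precedes it below -/
import Mathlib

section
/- For all positive integers a, μ₋, d₋ with μ₋ < a·d₋, there exists a constant C > 0, depending only on a, μ₋, d₋, such that for all t, s ∈ ℂ with |t| ≤ 1 and 0 < |s| < C, the polynomial z^{μ₋} − (s + t·z^a)^{d₋} has exactly μ₋ roots, counted with multiplicity, in the closed disk {z ∈ ℂ : |z| ≤ 1/2}. -/
/-!
For small `‖s‖`, a root `z` with `‖z‖ ≤ 1/2` has `‖s + t z^a‖` comparable to `‖s‖`, because
`‖z‖^(a d) = ‖z‖^μ ‖z‖^(a d - μ) ≤ ‖s + t z^a‖^d / 2` makes `t z^a` a fixed fraction of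
`s + t z^a`; so `‖z‖^μ ≍ ‖s‖^d`. A root with `‖z‖ > 1/2` instead has `s` negligible, so
`‖t z^a‖ ≍ ‖s + t z^a‖`, i.e. `‖t‖^d ‖z‖^K ≍ 1` with `K = a d - μ`. If `n` roots are small and
`m` large, then `n + m = a d = μ + K`, and the logarithm of Vieta's formula
`‖s‖^d = ‖t‖^d ∏ ‖z‖`, multiplied by `μ K`, becomes
`d (μ - n) (K log ‖s‖ + μ log ‖t‖) = O(1)`. Since `log ‖t‖ ≤ 0` and `log ‖s‖ → -∞`, this
forces `n = μ`.
-/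

open Polynomial Real

theorem abs_log_sub_log_le_log {u v L : ℝ} (hu : 0 < u) (hv : 0 < v) (huv : u ≤ L * v)
    (hvu : v ≤ L * u) : |log v - log u| ≤ log L := by
  have hL : 0 < L := pos_of_mul_pos_left (hv.trans_le hvu) hu.le
  have h₁ := log_le_log hu huv
  have h₂ := log_le_log hv hvu
  rw [log_mul hL.ne' hv.ne'] at h₁
  rw [log_mul hL.ne' hu.ne'] at h₂
  exact abs_sub_le_iff.mpr ⟨by linarith, by linarith⟩

theorem Multiset.abs_sum_map_sub_le {ι : Type*} (s : Multiset ι) {f : ι → ℝ} {c Λ : ℝ}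
    (h : ∀ i ∈ s, |f i - c| ≤ Λ) : |(s.map f).sum - card s * c| ≤ card s * Λ := by
  induction s using Multiset.induction_on with
  | empty => simp
  | cons i s ih =>
    have hs := ih fun j hj => h j (mem_cons_of_mem hj)
    have hi := h i (mem_cons_self i s)
    simp only [map_cons, sum_cons, card_cons, Nat.cast_succ]
    calc |f i + (s.map f).sum - (card s + 1) * c|
        = |(f i - c) + ((s.map f).sum - card s * c)| := by ring_nf
      _ ≤ Λ + card s * Λ := (abs_add_le _ _).trans (add_le_add hi hs)
      _ = (card s + 1) * Λ := by ring

theorem Polynomial.log_norm_coeff_zero_eq {p : ℂ[X]} (hp : p.coeff 0 ≠ 0) :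
    log ‖p.coeff 0‖ = log ‖p.leadingCoeff‖ + (p.roots.map fun z => log ‖z‖).sum := by
  have hp0 : p ≠ 0 := fun h => hp (by simp [h])
  have hroots : ∀ x ∈ p.roots.map (‖·‖), x ≠ 0 := by
    simp only [Multiset.mem_map, mem_roots hp0]
    rintro _ ⟨z, hz, rfl⟩
    rw [norm_ne_zero_iff]
    rintro rfl
    exact hp (coeff_zero_eq_eval_zero p ▸ hz)
  rw [(IsAlgClosed.splits p).coeff_zero_eq_leadingCoeff_mul_prod_roots, norm_mul, norm_mul,
    norm_pow, norm_neg, norm_one, one_pow, one_mul,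
    show ‖p.roots.prod‖ = (p.roots.map (‖·‖)).prod from map_multiset_prod (normHom : ℂ →*₀ ℝ) _,
    log_mul (by simpa using hp0) (Multiset.prod_ne_zero fun h => hroots 0 h rfl),
    log_multiset_prod hroots, Multiset.map_map]
  rfl

theorem eq_of_log_balance {n m μ K : ℕ} {d X Y Ls Ll Λ : ℝ} (hnm : n + m = μ + K) (hK : 0 < K)
    (hd : 1 ≤ d) (hΛ : 0 ≤ Λ) (hV : d * X = d * Y + Ls + Ll)
    (hS : |μ * Ls - n * (d * X)| ≤ n * Λ) (hL : |K * Ll - m * -(d * Y)| ≤ m * Λ)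
    (hY : Y ≤ 0) (hX : X < -((μ + K) ^ 2 * Λ)) : n = μ := by
  by_contra hne
  have hnm' : (n : ℝ) + m = μ + K := by exact_mod_cast hnm
  have key : d * ((μ : ℝ) - n) * (K * X + μ * Y) =
      K * (μ * Ls - n * (d * X)) + μ * (K * Ll - m * -(d * Y)) := by
    linear_combination (μ * K : ℝ) * hV - (d * μ * Y) * hnm'
  have hgap : 1 ≤ |(μ : ℝ) - n| := by
    have h : (1 : ℤ) ≤ |(μ : ℤ) - n| :=
      Int.one_le_abs (sub_ne_zero.mpr (by exact_mod_cast Ne.symm hne))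
    exact_mod_cast h
  have hX0 : X < 0 := hX.trans_le (neg_nonpos.mpr (by positivity))
  have hlhs : -X ≤ |d * ((μ : ℝ) - n) * (K * X + μ * Y)| := by
    have hK1 : (1 : ℝ) ≤ K := by exact_mod_cast hK
    rw [abs_mul, abs_mul, abs_of_pos (by linarith : 0 < d)]
    calc -X ≤ -(K * X + μ * Y) := by nlinarith
      _ ≤ |K * X + μ * Y| := neg_le_abs _
      _ ≤ d * |(μ : ℝ) - n| * |K * X + μ * Y| :=
        le_mul_of_one_le_left (abs_nonneg _) (one_le_mul_of_one_le_of_one_le hd hgap)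
  have hrhs : |K * (μ * Ls - n * (d * X)) + μ * (K * Ll - m * -(d * Y))| ≤ (μ + K) ^ 2 * Λ := by
    calc _ ≤ K * (n * Λ) + μ * (m * Λ) := by
          refine (abs_add_le _ _).trans (add_le_add ?_ ?_) <;> rw [abs_mul, Nat.abs_cast] <;>
            gcongr
      _ ≤ (μ + K) ^ 2 * Λ := by
          have h : ((μ : ℝ) + K) ^ 2 * Λ = K * (n * Λ) + μ * (m * Λ) + (μ * n + K * m) * Λ := by
            linear_combination (μ + K : ℝ) * Λ * hnm'.symm
          rw [h]
          exact le_add_of_nonneg_right (by positivity)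
  linarith [key ▸ hlhs]

noncomputable def rootPoly (a μ d : ℕ) (s t : ℂ) : ℂ[X] := X ^ μ - (C s + C t * X ^ a) ^ d

section
variable {a μ d : ℕ} {s t z : ℂ}

theorem rootPoly_eq_of_mem_roots (hz : z ∈ (rootPoly a μ d s t).roots) :
    z ^ μ = (s + t * z ^ a) ^ d := by
  simpa [rootPoly, sub_eq_zero] using (mem_roots'.mp hz).2

theorem coeff_zero_rootPoly (ha : 0 < a) (hμ : 0 < μ) :
    (rootPoly a μ d s t).coeff 0 = -s ^ d := by
  simp [rootPoly, coeff_zero_eq_eval_zero, ha.ne', hμ.ne']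

theorem rootPoly_zero_right : rootPoly a μ d s 0 = X ^ μ - C (s ^ d) := by
  simp [rootPoly]

theorem natDegree_rootPoly (hμd : μ < a * d) (ht : t ≠ 0) :
    (rootPoly a μ d s t).natDegree = a * d ∧ (rootPoly a μ d s t).leadingCoeff = -t ^ d := by
  have ha : 0 < a := Nat.pos_of_mul_pos_right (Nat.zero_lt_of_lt hμd)
  have hq : (C s + C t * X ^ a).natDegree = a ∧ (C s + C t * X ^ a).leadingCoeff = t := by
    have hlt : (C s).degree < (C t * X ^ a).degree := by
      rw [degree_C_mul_X_pow a ht]; exact degree_C_le.trans_lt (by exact_mod_cast ha)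
    rw [natDegree_add_eq_right_of_degree_lt hlt, leadingCoeff_add_of_degree_lt hlt]
    exact ⟨natDegree_C_mul_X_pow a t ht, leadingCoeff_C_mul_X_pow t a⟩
  have hlt : (X ^ μ : ℂ[X]).natDegree < ((C s + C t * X ^ a) ^ d).natDegree := by
    rw [natDegree_X_pow, natDegree_pow, hq.1, mul_comm]; exact hμd
  rw [rootPoly, natDegree_sub_eq_right_of_natDegree_lt hlt, natDegree_pow, hq.1,
    leadingCoeff_sub_of_degree_lt' (degree_lt_degree hlt), leadingCoeff_pow, hq.2]
  exact ⟨mul_comm _ _, rfl⟩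

theorem norm_comparable_of_small_root (hμd : μ < a * d) (ht : ‖t‖ ≤ 1)
    (hz : z ^ μ = (s + t * z ^ a) ^ d) (hz2 : ‖z‖ ≤ 1 / 2) :
    ‖s‖ ≤ 2 * d * ‖s + t * z ^ a‖ ∧ ‖s + t * z ^ a‖ ≤ 2 * d * ‖s‖ := by
  have hd : 0 < d := Nat.pos_of_mul_pos_left (Nat.zero_lt_of_lt hμd)
  have hd1 : (1 : ℝ) ≤ d := by exact_mod_cast hd
  set ω := ‖s + t * z ^ a‖
  have hzω : ‖z‖ ^ μ = ω ^ d := by rw [← norm_pow, hz, norm_pow]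
  have hpow : (‖z‖ ^ a) ^ d ≤ ω ^ d / 2 := by
    calc (‖z‖ ^ a) ^ d = ‖z‖ ^ μ * ‖z‖ ^ (a * d - μ) := by
          rw [← pow_mul, ← pow_add, Nat.add_sub_cancel' hμd.le]
      _ ≤ ‖z‖ ^ μ * (1 / 2) := by
          gcongr
          exact (pow_le_of_le_one (norm_nonneg _) (by linarith) (by omega)).trans hz2
      _ = ω ^ d / 2 := by rw [hzω]; ring
  set ρ : ℝ := 1 - 1 / (2 * d)
  have hρ : 1 / 2 ≤ ρ ^ d := by
    have h := one_add_mul_le_pow (a := -(1 / (2 * d) : ℝ))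
      (by linarith [show 1 / (2 * d : ℝ) ≤ 1 by rw [div_le_one (by positivity)]; linarith]) d
    have e : (1 : ℝ) + d * -(1 / (2 * d)) = 1 / 2 := by field_simp; ring
    rwa [e, ← sub_eq_add_neg] at h
  have hρ0 : 0 ≤ ρ := by
    simp only [ρ]; rw [sub_nonneg, div_le_one (by positivity)]; linarith
  have hza : ‖z‖ ^ a ≤ ρ * ω := by
    refine (pow_le_pow_iff_left₀ (by positivity) (by positivity) hd.ne').mp (hpow.trans ?_)
    rw [mul_pow]
    nlinarith [pow_nonneg (norm_nonneg (s + t * z ^ a)) d]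
  have htz : ‖t * z ^ a‖ ≤ ρ * ω := by
    rw [norm_mul, norm_pow]
    exact (mul_le_of_le_one_left (by positivity) ht).trans hza
  have hup : ω ≤ ‖s‖ + ‖t * z ^ a‖ := norm_add_le _ _
  have hlo : ‖s‖ ≤ ω + ‖t * z ^ a‖ := by simpa using norm_sub_le (s + t * z ^ a) (t * z ^ a)
  have hρ1 : ρ ≤ 1 := sub_le_self _ (by positivity)
  constructor
  · nlinarith [norm_nonneg (s + t * z ^ a)]
  · have h : ω / (2 * d) ≤ ‖s‖ := by
      have : ω - ρ * ω = ω / (2 * d) := by simp only [ρ]; ring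
      linarith
    calc ω = 2 * d * (ω / (2 * d)) := by field_simp
      _ ≤ 2 * d * ‖s‖ := by gcongr

theorem norm_comparable_of_large_root (hd : d ≠ 0) (hs : 2 * ‖s‖ < (1 / 2) ^ μ)
    (hz : z ^ μ = (s + t * z ^ a) ^ d) (hz2 : 1 / 2 < ‖z‖) :
    ‖s + t * z ^ a‖ ≤ 2 * ‖t * z ^ a‖ ∧ ‖t * z ^ a‖ ≤ 2 * ‖s + t * z ^ a‖ := by
  set ω := ‖s + t * z ^ a‖
  have hω : (1 / 2) ^ μ ≤ ω ^ d := by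
    rw [← norm_pow, ← hz, norm_pow]
    exact pow_le_pow_left₀ (by norm_num) hz2.le μ
  have hsω : 2 * ‖s‖ ≤ ω := by
    by_contra! h
    have hω1 : ω ≤ 1 := by
      linarith [pow_le_one₀ (n := μ) (by norm_num : (0 : ℝ) ≤ 1 / 2) (by norm_num)]
    linarith [pow_le_of_le_one (norm_nonneg _) hω1 hd]
  have hup : ω ≤ ‖s‖ + ‖t * z ^ a‖ := norm_add_le _ _
  have hlo : ‖t * z ^ a‖ ≤ ω + ‖s‖ := by simpa using norm_sub_le (s + t * z ^ a) s
  exact ⟨by linarith, by linarith⟩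

theorem abs_log_small_root_le (hμd : μ < a * d) (ht : ‖t‖ ≤ 1) (hs : s ≠ 0)
    (hz : z ^ μ = (s + t * z ^ a) ^ d) (hz2 : ‖z‖ ≤ 1 / 2) :
    |μ * log ‖z‖ - d * log ‖s‖| ≤ d * log (2 * d) := by
  obtain ⟨h₁, h₂⟩ := norm_comparable_of_small_root hμd ht hz hz2
  have hs0 : 0 < ‖s‖ := norm_pos_iff.mpr hs
  have hω : 0 < ‖s + t * z ^ a‖ := pos_of_mul_pos_right (hs0.trans_le h₁) (by positivity)
  rw [← log_pow, ← norm_pow, hz, norm_pow, log_pow, ← mul_sub, abs_mul, Nat.abs_cast]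
  exact mul_le_mul_of_nonneg_left (abs_log_sub_log_le_log hs0 hω h₁ h₂) (Nat.cast_nonneg d)

theorem abs_log_large_root_le (hd : d ≠ 0) (ht : t ≠ 0) (hs : 2 * ‖s‖ < (1 / 2) ^ μ)
    (hz : z ^ μ = (s + t * z ^ a) ^ d) (hz2 : 1 / 2 < ‖z‖) :
    |(a * d - μ : ℝ) * log ‖z‖ - -(d * log ‖t‖)| ≤ d * log 2 := by
  obtain ⟨h₁, h₂⟩ := norm_comparable_of_large_root hd hs hz hz2
  have hz0 : z ≠ 0 := norm_pos_iff.mp ((by norm_num : (0 : ℝ) < 1 / 2).trans hz2)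
  have htz : 0 < ‖t * z ^ a‖ := norm_pos_iff.mpr (mul_ne_zero ht (pow_ne_zero a hz0))
  have hω : 0 < ‖s + t * z ^ a‖ := pos_of_mul_pos_right (htz.trans_le h₂) (by norm_num)
  have hlog_tz : log ‖t * z ^ a‖ = log ‖t‖ + a * log ‖z‖ := by
    rw [norm_mul, norm_pow, log_mul (norm_ne_zero_iff.mpr ht) (by positivity), log_pow]
  have hlog_ω : d * log ‖s + t * z ^ a‖ = μ * log ‖z‖ := by
    rw [← log_pow, ← norm_pow, ← hz, norm_pow, log_pow]
  have e : (a * d - μ : ℝ) * log ‖z‖ - -(d * log ‖t‖) =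
      d * (log ‖t * z ^ a‖ - log ‖s + t * z ^ a‖) := by
    rw [mul_sub, hlog_ω, hlog_tz]; ring
  rw [e, abs_mul, Nat.abs_cast]
  exact mul_le_mul_of_nonneg_left (abs_log_sub_log_le_log hω htz h₁ h₂) (Nat.cast_nonneg d)

theorem card_small_roots_rootPoly_zero_right (hd : d ≠ 0) (hs : s ≠ 0)
    (hs₂ : 2 * ‖s‖ < (1 / 2) ^ μ) :
    Multiset.card ((rootPoly a μ d s 0).roots.filter (‖·‖ ≤ 1 / 2)) = μ := by
  rw [Multiset.filter_eq_self.mpr, IsAlgClosed.card_roots_eq_natDegree, rootPoly_zero_right,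
    natDegree_X_pow_sub_C]
  intro z hz
  by_contra! hz2
  have h := (norm_comparable_of_large_root hd hs₂ (rootPoly_eq_of_mem_roots hz) hz2).1
  simp only [zero_mul, add_zero, norm_zero, mul_zero, norm_le_zero_iff] at h
  exact hs h

theorem card_small_roots_rootPoly (hμ : 0 < μ) (hμd : μ < a * d) (ht : ‖t‖ ≤ 1) (ht0 : t ≠ 0)
    (hs : s ≠ 0) (hs₂ : 2 * ‖s‖ < (1 / 2) ^ μ)
    (hs₃ : log ‖s‖ < -((a * d) ^ 2 * (d * log (2 * d)))) :
    Multiset.card ((rootPoly a μ d s t).roots.filter (‖·‖ ≤ 1 / 2)) = μ := by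
  have ha : 0 < a := Nat.pos_of_mul_pos_right (Nat.zero_lt_of_lt hμd)
  have hd : 0 < d := Nat.pos_of_mul_pos_left (Nat.zero_lt_of_lt hμd)
  have hd1 : (1 : ℝ) ≤ d := by exact_mod_cast hd
  have hK : ((a * d - μ : ℕ) : ℝ) = a * d - μ := by push_cast [Nat.cast_sub hμd.le]; ring
  have hlog : log 2 ≤ log (2 * d) := log_le_log two_pos (by linarith)
  obtain ⟨hdeg, hlc⟩ := natDegree_rootPoly (s := s) hμd ht0
  have hV := log_norm_coeff_zero_eq (p := rootPoly a μ d s t)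
    (by rw [coeff_zero_rootPoly ha hμ]; exact neg_ne_zero.mpr (pow_ne_zero d hs))
  rw [coeff_zero_rootPoly ha hμ, hlc, norm_neg, norm_neg, norm_pow, norm_pow, log_pow, log_pow,
    ← Multiset.filter_add_not (‖·‖ ≤ 1 / 2) (rootPoly a μ d s t).roots, Multiset.map_add,
    Multiset.sum_add, ← add_assoc] at hV
  refine eq_of_log_balance (K := a * d - μ)
    (m := Multiset.card ((rootPoly a μ d s t).roots.filter fun z => ¬‖z‖ ≤ 1 / 2)) ?_ (by omega)
    hd1
    (mul_nonneg (Nat.cast_nonneg d) (log_nonneg (by linarith : (1 : ℝ) ≤ 2 * d))) hV ?_ ?_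
    (log_nonpos (norm_nonneg t) ht) ?_
  · rw [← Multiset.card_add, Multiset.filter_add_not, IsAlgClosed.card_roots_eq_natDegree, hdeg]
    omega
  · rw [← Multiset.sum_map_mul_left]
    refine Multiset.abs_sum_map_sub_le _ fun z hz => ?_
    rw [Multiset.mem_filter] at hz
    exact abs_log_small_root_le hμd ht hs (rootPoly_eq_of_mem_roots hz.1) hz.2
  · rw [← Multiset.sum_map_mul_left]
    refine Multiset.abs_sum_map_sub_le _ fun z hz => ?_
    rw [Multiset.mem_filter, not_le] at hz
    rw [hK]
    exact (abs_log_large_root_le hd.ne' ht0 hs₂ (rootPoly_eq_of_mem_roots hz.1) hz.2).trans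
      (mul_le_mul_of_nonneg_left hlog (Nat.cast_nonneg d))
  · rw [hK]
    convert hs₃ using 4
    ring

end

theorem stmt_0_general (a μm dm : ℕ) (hμ : 0 < μm)
    (hμd : μm < a * dm) :
    ∃ C : ℝ, 0 < C ∧
      ∀ t s : ℂ, ‖t‖ ≤ 1 → 0 < ‖s‖ → ‖s‖ < C →
        Multiset.card
          (Multiset.filter (fun z => ‖z‖ ≤ 1 / 2)
            (Polynomial.roots
              (Polynomial.X ^ μm
                - (Polynomial.C s + Polynomial.C t * Polynomial.X ^ a) ^ dm))) = μm := by
  refine ⟨min ((1 / 2) ^ μm / 2) (exp (-((a * dm) ^ 2 * (dm * log (2 * dm))))), by positivity, ?_⟩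
  intro t s ht hs₀ hsC
  have hs : s ≠ 0 := norm_pos_iff.mp hs₀
  have hs₂ : 2 * ‖s‖ < (1 / 2) ^ μm := by linarith [hsC.trans_le (min_le_left _ _)]
  rcases eq_or_ne t 0 with rfl | ht₀
  · exact card_small_roots_rootPoly_zero_right (by rintro rfl; simp at hμd) hs hs₂
  · exact card_small_roots_rootPoly hμ hμd ht ht₀ hs hs₂
      ((log_lt_iff_lt_exp hs₀).mpr (hsC.trans_le (min_le_right _ _)))

/-- For all positive integers `a, μ₋, d₋` with `μ₋ < a·d₋`, there is a
constant `C > 0` (depending only on `a, μ₋, d₋`) such that for all `t s : ℂ` with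
`|t| ≤ 1` and `0 < |s| < C`, the polynomial `z^μ₋ − (s + t·z^a)^d₋` has exactly `μ₋`
roots, counted with multiplicity, in the closed disk `{z : |z| ≤ 1/2}`. -/
theorem stmt_0 (a μm dm : ℕ) (ha : 0 < a) (hμ : 0 < μm) (hd : 0 < dm)
    (hμd : μm < a * dm) :
    ∃ C : ℝ, 0 < C ∧
      ∀ t s : ℂ, ‖t‖ ≤ 1 → 0 < ‖s‖ → ‖s‖ < C →
        Multiset.card
          (Multiset.filter (fun z => ‖z‖ ≤ 1 / 2)
            (Polynomial.roots
              (Polynomial.X ^ μm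
                - (Polynomial.C s + Polynomial.C t * Polynomial.X ^ a) ^ dm))) = μm :=
  stmt_0_general a μm dm hμ hμd
end

section
/- Fix positive integers a, μ₋, d₋ with μ₋ < a·d₋ and a real number c > 0. There exists a constant C > 0, depending only on a, μ₋, d₋, c, such that for all real s₀, t₀ with 0 < s₀ < C and 0 < t₀ < C, the polynomial z^{μ₋} − c·(s₀ + t₀·z^a)^{d₋} has exactly two positive real roots; one of them lies in the interval (0, 1/2], the other lies in the interval (2, ∞), and both are simple roots. -/
/-- The polynomial `z^μ₋ − c·(s + t z^a)^d₋`. -/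
noncomputable def polyB (a μm dm : ℕ) (c : ℝ) (t s : ℂ) : Polynomial ℂ :=
  Polynomial.X ^ μm
    - Polynomial.C (c : ℂ) * (Polynomial.C s + Polynomial.C t * Polynomial.X ^ a) ^ dm

open Polynomial Set

/-- The real function whose zeros on `(0,∞)` are the positive real roots. -/
noncomputable def Fb (a μm dm : ℕ) (c s t x : ℝ) : ℝ := x ^ μm - c * (s + t * x ^ a) ^ dm

/-- The real derivative of `Fb`. -/
noncomputable def Gb (a μm dm : ℕ) (c s t x : ℝ) : ℝ :=
  μm * x ^ (μm - 1) - c * (dm * (s + t * x ^ a) ^ (dm - 1) * (t * (a * x ^ (a - 1))))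

/-- The logarithmic version of `Fb`. -/
noncomputable def Hf (a μm dm : ℕ) (c s t : ℝ) (x : ℝ) : ℝ :=
  μm * Real.log x - Real.log c - dm * Real.log (s + t * x ^ a)

lemma evalB (a μm dm : ℕ) (c s t x : ℝ) :
    Polynomial.eval (x : ℂ) (polyB a μm dm c (t : ℂ) (s : ℂ)) = ((Fb a μm dm c s t x : ℝ) : ℂ) := by
  simp [polyB, Fb]

lemma evalB_zero_iff (a μm dm : ℕ) (c s t x : ℝ) :
    Polynomial.eval (x : ℂ) (polyB a μm dm c (t : ℂ) (s : ℂ)) = 0 ↔ Fb a μm dm c s t x = 0 := by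
  rw [evalB]; exact_mod_cast Complex.ofReal_eq_zero

lemma evalDerivB (a μm dm : ℕ) (c s t x : ℝ) :
    Polynomial.eval (x : ℂ) (Polynomial.derivative (polyB a μm dm c (t : ℂ) (s : ℂ)))
      = ((Gb a μm dm c s t x : ℝ) : ℂ) := by
  simp [polyB, Gb, Polynomial.derivative_pow]

lemma inner_pos (a : ℕ) (s t : ℝ) (hs : 0 < s) (ht : 0 < t) {x : ℝ} (hx : 0 ≤ x) :
    0 < s + t * x ^ a :=
  add_pos_of_pos_of_nonneg hs (by positivity)

lemma Fb_zero_iff_Hf (a μm dm : ℕ) (c s t : ℝ) (hμ : 0 < μm) (hc : 0 < c) (hs : 0 < s)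
    (ht : 0 < t) {x : ℝ} (hx : 0 < x) :
    Fb a μm dm c s t x = 0 ↔ Hf a μm dm c s t x = 0 := by
  have hT : 0 < s + t * x ^ a := inner_pos a s t hs ht hx.le
  have h1 : (0:ℝ) < x ^ μm := by positivity
  have h2 : (0:ℝ) < c * (s + t * x ^ a) ^ dm := by positivity
  have key : Fb a μm dm c s t x = 0 ↔ x ^ μm = c * (s + t * x ^ a) ^ dm := by
    rw [Fb, sub_eq_zero]
  rw [key]
  constructor
  · intro h
    have := congrArg Real.log h
    rw [Real.log_pow, Real.log_mul hc.ne' (by positivity), Real.log_pow] at this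
    rw [Hf]; linarith
  · intro h
    have : Real.log (x ^ μm) = Real.log (c * (s + t * x ^ a) ^ dm) := by
      rw [Real.log_pow, Real.log_mul hc.ne' (by positivity), Real.log_pow]
      rw [Hf] at h; linarith
    exact Real.log_injOn_pos (mem_Ioi.2 h1) (mem_Ioi.2 h2) this

lemma hasDerivAt_Hf (a μm dm : ℕ) (c s t : ℝ) (ha : 0 < a) (hs : 0 < s) (ht : 0 < t)
    {x : ℝ} (hx : 0 < x) :
    HasDerivAt (Hf a μm dm c s t)
      ((μm * s - ((a : ℝ) * dm - μm) * t * x ^ a) / (x * (s + t * x ^ a))) x := by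
  have hT : 0 < s + t * x ^ a := inner_pos a s t hs ht hx.le
  have d1 : HasDerivAt (fun y : ℝ => Real.log y) x⁻¹ x := Real.hasDerivAt_log hx.ne'
  have d2 : HasDerivAt (fun y : ℝ => s + t * y ^ a) (t * (a * x ^ (a - 1))) x :=
    ((hasDerivAt_pow a x).const_mul t).const_add s
  have d3 : HasDerivAt (fun y : ℝ => Real.log (s + t * y ^ a))
      ((t * (a * x ^ (a - 1))) / (s + t * x ^ a)) x := d2.log hT.ne'
  have d4 : HasDerivAt (Hf a μm dm c s t)
      (μm * x⁻¹ - dm * ((t * (a * x ^ (a - 1))) / (s + t * x ^ a))) x := by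
    exact ((d1.const_mul (μm : ℝ)).sub_const (Real.log c)).sub (d3.const_mul (dm : ℝ))
  convert d4 using 1
  have hxa : x ^ (a - 1) * x = x ^ a := by
    rw [← pow_succ]; congr 1; omega
  field_simp
  rw [← hxa]
  ring

lemma Gb_ne_zero (a μm dm : ℕ) (c s t : ℝ) (ha : 0 < a) (hμ : 0 < μm) (hd : 0 < dm)
    (hs : 0 < s) (ht : 0 < t)
    {x : ℝ} (hx : 0 < x) (hF : Fb a μm dm c s t x = 0)
    (hnum : (μm : ℝ) * s - ((a : ℝ) * dm - μm) * t * x ^ a ≠ 0) :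
    Gb a μm dm c s t x ≠ 0 := by
  have hT : 0 < s + t * x ^ a := add_pos_of_pos_of_nonneg hs (by positivity)
  have key : c * (s + t * x ^ a) ^ dm = x ^ μm := by
    rw [Fb, sub_eq_zero] at hF; exact hF.symm
  have e1 : c * ((s + t * x ^ a) ^ (dm - 1) * (s + t * x ^ a)) = x ^ μm := by
    rw [← pow_succ, Nat.sub_add_cancel hd]; exact key
  have hswap : x ^ (μm - 1) * x ^ a = x ^ (a - 1) * x ^ μm := by
    rw [← pow_add, ← pow_add]
    congr 1
    omega
  have hid : Gb a μm dm c s t x * (s + t * x ^ a)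
      = x ^ (μm - 1) * ((μm : ℝ) * s - ((a : ℝ) * dm - μm) * t * x ^ a) := by
    rw [Gb]
    linear_combination (-(dm * t * a * x ^ (a-1))) * e1 + (a * dm * t) * hswap
  intro hG
  rw [hG, zero_mul] at hid
  have hxμ : (0:ℝ) < x ^ (μm - 1) := by positivity
  exact hnum (by nlinarith [hid])

/-- Main analytic statement with explicit positivity hypotheses at 1/2 and 2. -/
theorem main_aux (a μm dm : ℕ) (c s t : ℝ) (ha : 0 < a) (hμ : 0 < μm) (hd : 0 < dm)
    (hμd : μm < a * dm) (hc : 0 < c) (hs : 0 < s) (ht : 0 < t)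
    (h12 : 0 < Fb a μm dm c s t (1/2)) (h2 : 0 < Fb a μm dm c s t 2) :
    ∃ x₁ x₂ : ℝ,
      x₁ ∈ Set.Ioc (0 : ℝ) (1 / 2) ∧ x₂ ∈ Set.Ioi (2 : ℝ) ∧
      Fb a μm dm c s t x₁ = 0 ∧ Fb a μm dm c s t x₂ = 0 ∧
      (∀ x : ℝ, 0 < x → Fb a μm dm c s t x = 0 → x = x₁ ∨ x = x₂) ∧
      ((μm : ℝ) * s - ((a : ℝ) * dm - μm) * t * x₁ ^ a ≠ 0) ∧
      ((μm : ℝ) * s - ((a : ℝ) * dm - μm) * t * x₂ ^ a ≠ 0) := by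
  set K : ℝ := (a : ℝ) * dm - μm with hKdef
  have hK : 0 < K := by
    have : (μm : ℝ) < (a : ℝ) * dm := by exact_mod_cast hμd
    linarith
  set R : ℝ := μm * s / (K * t) with hRdef
  have hR : 0 < R := by positivity
  set xs : ℝ := R ^ ((a : ℝ)⁻¹) with hxsdef
  have hxs : 0 < xs := Real.rpow_pos_of_pos hR _
  have hxsa : xs ^ a = R := by
    rw [hxsdef, ← Real.rpow_natCast (R ^ ((a:ℝ)⁻¹)) a, ← Real.rpow_mul hR.le,
      inv_mul_cancel₀ (by exact_mod_cast ha.ne' : (a:ℝ) ≠ 0), Real.rpow_one]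
  have hcmp : ∀ x : ℝ, 0 ≤ x → (x < xs ↔ x ^ a < R) := by
    intro x hx
    rw [← hxsa]
    exact (pow_lt_pow_iff_left₀ hx hxs.le ha.ne').symm
  have hcmp' : ∀ x : ℝ, 0 ≤ x → (xs < x ↔ R < x ^ a) := by
    intro x hx
    rw [← hxsa]
    exact (pow_lt_pow_iff_left₀ hxs.le hx ha.ne').symm
  have hnum_pos : ∀ x : ℝ, 0 < x → x < xs → 0 < μm * s - K * t * x ^ a := by
    intro x hx hlt
    have := (hcmp x hx.le).1 hlt
    rw [hRdef, lt_div_iff₀ (by positivity)] at this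
    nlinarith
  have hnum_neg : ∀ x : ℝ, 0 < x → xs < x → μm * s - K * t * x ^ a < 0 := by
    intro x hx hlt
    have := (hcmp' x hx.le).1 hlt
    rw [hRdef, div_lt_iff₀ (by positivity)] at this
    nlinarith
  have hHc : ∀ x : ℝ, 0 < x → ContinuousAt (Hf a μm dm c s t) x := fun x hx =>
    (hasDerivAt_Hf a μm dm c s t ha hs ht hx).continuousAt
  have hmono : StrictMonoOn (Hf a μm dm c s t) (Ioc 0 xs) := by
    apply strictMonoOn_of_deriv_pos (convex_Ioc 0 xs)
    · exact fun x hx => (hHc x hx.1).continuousWithinAt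
    · intro x hx
      rw [interior_Ioc] at hx
      rw [(hasDerivAt_Hf a μm dm c s t ha hs ht hx.1).deriv]
      have hx0 : 0 < x := hx.1
      have hT : 0 < s + t * x ^ a := inner_pos a s t hs ht hx0.le
      exact div_pos (hnum_pos x hx0 hx.2) (by positivity)
  have hanti : StrictAntiOn (Hf a μm dm c s t) (Ici xs) := by
    apply strictAntiOn_of_deriv_neg (convex_Ici xs)
    · exact fun x hx => (hHc x (hxs.trans_le hx)).continuousWithinAt
    · intro x hx
      rw [interior_Ici] at hx
      have hx0 : 0 < x := hxs.trans hx
      rw [(hasDerivAt_Hf a μm dm c s t ha hs ht hx0).deriv]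
      have hT : 0 < s + t * x ^ a := inner_pos a s t hs ht hx0.le
      exact div_neg_of_neg_of_pos (hnum_neg x hx0 hx) (by positivity)
  have hFc : Continuous (Fb a μm dm c s t) := by
    unfold Fb
    exact (continuous_pow μm).sub (continuous_const.mul
      ((continuous_const.add (continuous_const.mul (continuous_pow a))).pow dm))
  have hF0 : Fb a μm dm c s t 0 < 0 := by
    have : Fb a μm dm c s t 0 = -(c * s ^ dm) := by
      simp [Fb, zero_pow hμ.ne', zero_pow ha.ne']
    rw [this, neg_lt_zero]; positivity
  obtain ⟨x₁, hx₁mem, hx₁⟩ : ∃ x₁ ∈ Ioo (0:ℝ) (1/2), Fb a μm dm c s t x₁ = 0 := by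
    have := intermediate_value_Ioo (by norm_num : (0:ℝ) ≤ 1/2) hFc.continuousOn
    have h0mem : (0:ℝ) ∈ Ioo (Fb a μm dm c s t 0) (Fb a μm dm c s t (1/2)) := ⟨hF0, h12⟩
    obtain ⟨x₁, hmem, hval⟩ := this h0mem
    exact ⟨x₁, hmem, hval⟩
  set M : ℝ := max 3 (2 / (c * t ^ dm)) with hMdef
  have hM3 : (3:ℝ) ≤ M := le_max_left _ _
  have hM1 : (1:ℝ) ≤ M := by linarith
  have hM2 : 2 / (c * t ^ dm) ≤ M := le_max_right _ _
  have hMpos : (0:ℝ) < M := by linarith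
  have hFM : Fb a μm dm c s t M < 0 := by
    have hb1 : c * (t * M ^ a) ^ dm ≤ c * (s + t * M ^ a) ^ dm := by
      have : (t * M ^ a) ^ dm ≤ (s + t * M ^ a) ^ dm := by
        apply pow_le_pow_left₀ (by positivity)
        linarith
      nlinarith
    have he : c * (t * M ^ a) ^ dm = c * t ^ dm * (M ^ μm * M ^ (a*dm - μm)) := by
      have hsplit : a * dm = μm + (a*dm - μm) := by omega
      rw [mul_pow, ← pow_mul, hsplit, pow_add, Nat.add_sub_cancel_left]
      ring
    have hMK : M ≤ M ^ (a*dm - μm) := by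
      apply le_self_pow₀ hM1
      omega
    have hct : 2 ≤ c * t ^ dm * M := by
      rw [div_le_iff₀ (by positivity)] at hM2
      linarith
    have hMμ : (0:ℝ) < M ^ μm := by positivity
    have : 2 * M ^ μm ≤ c * t ^ dm * (M ^ μm * M ^ (a*dm - μm)) := by
      have h1 : c * t ^ dm * (M ^ μm * M ^ (a*dm - μm))
          = (c * t ^ dm * M ^ (a*dm-μm)) * M ^ μm := by ring
      rw [h1]
      apply mul_le_mul_of_nonneg_right _ hMμ.le
      calc (2:ℝ) ≤ c * t ^ dm * M := hct
        _ ≤ c * t ^ dm * M ^ (a*dm-μm) := by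
            apply mul_le_mul_of_nonneg_left hMK (by positivity)
    rw [Fb]
    nlinarith
  obtain ⟨x₂, hx₂mem, hx₂⟩ : ∃ x₂ ∈ Ioo (2:ℝ) M, Fb a μm dm c s t x₂ = 0 := by
    have h2M : (2:ℝ) ≤ M := by linarith
    have := intermediate_value_Ioo' h2M hFc.continuousOn
    have h0mem : (0:ℝ) ∈ Ioo (Fb a μm dm c s t M) (Fb a μm dm c s t 2) := ⟨hFM, h2⟩
    obtain ⟨x₂, hmem, hval⟩ := this h0mem
    exact ⟨x₂, hmem, hval⟩
  have hx₁pos : 0 < x₁ := hx₁mem.1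
  have hx₂pos : (0:ℝ) < x₂ := by linarith [hx₂mem.1]
  have hx₁lt : x₁ < 2 := by linarith [hx₁mem.2]
  have hx₁ne : x₁ ≠ x₂ := by have := hx₂mem.1; intro h; rw [h] at hx₁lt; linarith
  have hH₁ : Hf a μm dm c s t x₁ = 0 := (Fb_zero_iff_Hf a μm dm c s t hμ hc hs ht hx₁pos).1 hx₁
  have hH₂ : Hf a μm dm c s t x₂ = 0 := (Fb_zero_iff_Hf a μm dm c s t hμ hc hs ht hx₂pos).1 hx₂
  have hx₁xs : x₁ < xs := by
    by_contra hcon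
    push_neg at hcon
    have hx₂xs : xs ≤ x₂ := le_trans hcon (by linarith [hx₂mem.1, hx₁mem.2])
    exact hx₁ne (hanti.injOn (mem_Ici.2 hcon) (mem_Ici.2 hx₂xs) (hH₁.trans hH₂.symm))
  have hx₂xs : xs < x₂ := by
    by_contra hcon
    push_neg at hcon
    have hx₁in : x₁ ∈ Ioc (0:ℝ) xs := ⟨hx₁pos, hx₁xs.le⟩
    have hx₂in : x₂ ∈ Ioc (0:ℝ) xs := ⟨hx₂pos, hcon⟩
    exact hx₁ne (hmono.injOn hx₁in hx₂in (hH₁.trans hH₂.symm))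
  refine ⟨x₁, x₂, ⟨hx₁pos, hx₁mem.2.le⟩, hx₂mem.1, hx₁, hx₂, ?_, ?_, ?_⟩
  · intro x hx hFx
    have hHx : Hf a μm dm c s t x = 0 := (Fb_zero_iff_Hf a μm dm c s t hμ hc hs ht hx).1 hFx
    rcases le_or_gt x xs with hle | hlt
    · left
      exact hmono.injOn ⟨hx, hle⟩ ⟨hx₁pos, hx₁xs.le⟩ (hHx.trans hH₁.symm)
    · right
      exact hanti.injOn (mem_Ici.2 hlt.le) (mem_Ici.2 hx₂xs.le) (hHx.trans hH₂.symm)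
  · exact (hnum_pos x₁ hx₁pos hx₁xs).ne'
  · exact (hnum_neg x₂ hx₂pos hx₂xs).ne

theorem stmt_5 (a μm dm : ℕ) (ha : 0 < a) (hμ : 0 < μm) (hd : 0 < dm)
    (hμd : μm < a * dm) (c : ℝ) (hc : 0 < c) :
    ∃ C : ℝ, 0 < C ∧
      ∀ s₀ t₀ : ℝ, 0 < s₀ → s₀ < C → 0 < t₀ → t₀ < C →
        ∃ x₁ x₂ : ℝ,
          x₁ ∈ Set.Ioc (0 : ℝ) (1 / 2) ∧ x₂ ∈ Set.Ioi (2 : ℝ) ∧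
          Polynomial.eval (x₁ : ℂ) (polyB a μm dm c (t₀ : ℂ) (s₀ : ℂ)) = 0 ∧
          Polynomial.eval (x₂ : ℂ) (polyB a μm dm c (t₀ : ℂ) (s₀ : ℂ)) = 0 ∧
          Polynomial.rootMultiplicity (x₁ : ℂ) (polyB a μm dm c (t₀ : ℂ) (s₀ : ℂ)) = 1 ∧
          Polynomial.rootMultiplicity (x₂ : ℂ) (polyB a μm dm c (t₀ : ℂ) (s₀ : ℂ)) = 1 ∧
          ∀ x : ℝ, 0 < x →
            Polynomial.eval (x : ℂ) (polyB a μm dm c (t₀ : ℂ) (s₀ : ℂ)) = 0 →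
              x = x₁ ∨ x = x₂ := by
  classical
  set B : ℝ := 1 + 2 ^ a with hBdef
  have h2a : (0:ℝ) < 2 ^ a := by positivity
  have hBpos : (0:ℝ) < B := by positivity
  set C : ℝ := min (1 / B) ((1/2 : ℝ) ^ μm / (c * B)) with hCdef
  have hCpos : 0 < C := by
    apply lt_min (by positivity) (by positivity)
  refine ⟨C, hCpos, ?_⟩
  intro s₀ t₀ hs hsC ht htC
  -- key bound
  set u : ℝ := s₀ + t₀ * 2 ^ a with hudef
  have hupos : 0 < u := by positivity
  have huCB : u < C * B := by
    have h1 : t₀ * 2 ^ a < C * 2 ^ a := by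
      exact mul_lt_mul_of_pos_right htC h2a
    have : u < C + C * 2 ^ a := by rw [hudef]; linarith
    calc u < C + C * 2 ^ a := this
      _ = C * B := by rw [hBdef]; ring
  have hCB1 : C * B ≤ 1 := by
    have : C ≤ 1 / B := min_le_left _ _
    calc C * B ≤ (1 / B) * B := mul_le_mul_of_nonneg_right this hBpos.le
      _ = 1 := by field_simp
  have hu1 : u < 1 := lt_of_lt_of_le huCB hCB1
  have hupow : u ^ dm ≤ u := pow_le_of_le_one hupos.le hu1.le hd.ne'
  have hkey : c * u ^ dm < (1/2 : ℝ) ^ μm := by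
    have hC2 : C * (c * B) ≤ (1/2 : ℝ) ^ μm := by
      have : C ≤ (1/2 : ℝ) ^ μm / (c * B) := min_le_right _ _
      rwa [le_div_iff₀ (by positivity)] at this
    calc c * u ^ dm ≤ c * u := mul_le_mul_of_nonneg_left hupow hc.le
      _ < c * (C * B) := mul_lt_mul_of_pos_left huCB hc
      _ = C * (c * B) := by ring
      _ ≤ (1/2 : ℝ) ^ μm := hC2
  have h12 : 0 < Fb a μm dm c s₀ t₀ (1/2) := by
    rw [Fb]
    have hle : s₀ + t₀ * (1/2:ℝ) ^ a ≤ u := by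
      have : (1/2:ℝ) ^ a ≤ 2 ^ a := pow_le_pow_left₀ (by norm_num) (by norm_num) a
      rw [hudef]; nlinarith
    have hpos' : (0:ℝ) < s₀ + t₀ * (1/2:ℝ) ^ a := by positivity
    have : (s₀ + t₀ * (1/2:ℝ) ^ a) ^ dm ≤ u ^ dm := pow_le_pow_left₀ hpos'.le hle dm
    nlinarith
  have h2 : 0 < Fb a μm dm c s₀ t₀ 2 := by
    rw [Fb]
    have hhalf : ((1:ℝ)/2) ^ μm ≤ 1 := pow_le_one₀ (by norm_num) (by norm_num)
    have h2μ : (1:ℝ) ≤ 2 ^ μm := one_le_pow₀ (by norm_num)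
    have : u ^ dm = (s₀ + t₀ * 2 ^ a) ^ dm := by rw [hudef]
    nlinarith
  obtain ⟨x₁, x₂, hm₁, hm₂, hr₁, hr₂, huniq, hn₁, hn₂⟩ :=
    main_aux a μm dm c s₀ t₀ ha hμ hd hμd hc hs ht h12 h2
  set p : Polynomial ℂ := polyB a μm dm c (t₀ : ℂ) (s₀ : ℂ) with hpdef
  have hp0 : p ≠ 0 := by
    intro h
    have := evalB a μm dm c s₀ t₀ 2
    rw [← hpdef, h] at this
    simp only [Polynomial.eval_zero] at this
    have : Fb a μm dm c s₀ t₀ 2 = 0 := by exact_mod_cast this.symm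
    linarith
  have hmult : ∀ x : ℝ, 0 < x → Fb a μm dm c s₀ t₀ x = 0 →
      ((μm : ℝ) * s₀ - ((a : ℝ) * dm - μm) * t₀ * x ^ a ≠ 0) →
      Polynomial.rootMultiplicity (x : ℂ) p = 1 := by
    intro x hx hFx hnum
    have hroot : p.IsRoot (x : ℂ) := by
      rw [Polynomial.IsRoot, hpdef, evalB_zero_iff]; exact hFx
    have hpos : 0 < Polynomial.rootMultiplicity (x : ℂ) p :=
      (Polynomial.rootMultiplicity_pos hp0).2 hroot
    have hlt : ¬ (1 < Polynomial.rootMultiplicity (x : ℂ) p) := by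
      rw [Polynomial.one_lt_rootMultiplicity_iff_isRoot hp0]
      rintro ⟨-, hder⟩
      have hGeval := evalDerivB a μm dm c s₀ t₀ x
      rw [hpdef] at hder
      rw [Polynomial.IsRoot] at hder
      rw [hder] at hGeval
      have hG0 : Gb a μm dm c s₀ t₀ x = 0 := by exact_mod_cast hGeval.symm
      exact Gb_ne_zero a μm dm c s₀ t₀ ha hμ hd hs ht hx hFx hnum hG0
    omega
  refine ⟨x₁, x₂, hm₁, hm₂, ?_, ?_, ?_, ?_, ?_⟩
  · rw [evalB_zero_iff]; exact hr₁
  · rw [evalB_zero_iff]; exact hr₂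
  · exact hmult x₁ hm₁.1 hr₁ hn₁
  · exact hmult x₂ (by have := hm₂; simp only [mem_Ioi] at this; linarith) hr₂ hn₂
  · intro x hx hev
    exact huniq x hx ((evalB_zero_iff a μm dm c s₀ t₀ x).1 hev)
end

section
/- Let n ≥ 2 and let a = (a_1,…,a_n) be a tuple of integers with each a_i ≥ 2. Set λ := exp(2πi/μ(a)) and define λ_1 := λ and λ_{k+1} := λ·λ_k^{−a_k} for 1 ≤ k ≤ n−1. Then λ_n^{a_n} = λ, and for all t, s ∈ ℂ and all (z_1,…,z_n) ∈ ℂ^n one has g_a^{t, e^{iθ}s}(λ_1 z_1, λ_2 z_2, …, λ_n z_n) = exp(2πi/μ(a)) · g_a^{t,s}(z_1,…,z_n), where θ := 2π a_1/μ(a). -/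
open scoped BigOperators

/-- The signed chain polynomial
`p_a(z_1,…,z_n) = −z_1^{a_1}z_2 + z_2^{a_2}z_3 − ⋯ + (−1)^n z_n^{a_n}`
(indices `0`-based: `z i`, `a i` for `i = 0, …, n−1`). -/
noncomputable def chainP (n : ℕ) (a : ℕ → ℕ) (z : ℕ → ℂ) : ℂ :=
  (∑ k ∈ Finset.range (n - 1), (-1 : ℂ) ^ (k + 1) * z k ^ a k * z (k + 1))
    + (-1 : ℂ) ^ n * z (n - 1) ^ a (n - 1)

/-- The Milnor number `μ(a) = Σ_{k=0}^{n} (−1)^k a_{k+1}⋯a_n` (0-based: the product is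
over indices `k ≤ i < n`). -/
def muZ (n : ℕ) (a : ℕ → ℕ) : ℤ :=
  ∑ k ∈ Finset.range (n + 1), (-1 : ℤ) ^ k * ∏ i ∈ Finset.Ico k n, (a i : ℤ)

/-- `g_a^{t,s}(z) = z_1 − s z_2 − t z_1^{a_1} z_2 − p_{−a}(z_2,…,z_n)` (0-based). -/
noncomputable def gMap (n : ℕ) (a : ℕ → ℕ) (t s : ℂ) (z : ℕ → ℂ) : ℂ :=
  z 0 - s * z 1 - t * z 0 ^ a 0 * z 1
    - chainP (n - 1) (fun i => a (i + 1)) (fun i => z (i + 1))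

/-!
Write `ζ = exp(2πi/μ(a))` and `μ_k := μ(a_1,…,a_k)`, so that
`μ_{k+1} = a_{k+1} μ_k + (-1)^{k+1}`. Unwinding the recursion gives
`λ_k = ζ^{(-1)^{k-1} μ_{k-1}}`, and with `ζ^{μ_n} = 1` this yields `λ_n^{a_n} = ζ`.
Every monomial `z_k^{a_k} z_{k+1}` of the chain polynomial is then multiplied by
`λ_k^{a_k} λ_{k+1} = ζ`, while `e^{iθ} = ζ^{a_1} = λ_1^{a_1}` makes the term `s z_2`
scale by `ζ` too.
-/

theorem muZ_zero (a : ℕ → ℕ) : muZ 0 a = 1 := by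
  simp [muZ]

theorem muZ_succ (m : ℕ) (a : ℕ → ℕ) : muZ (m + 1) a = a m * muZ m a + (-1) ^ (m + 1) := by
  unfold muZ
  rw [Finset.sum_range_succ, Finset.Ico_self, Finset.prod_empty, mul_one, Finset.mul_sum]
  congr 1
  refine Finset.sum_congr rfl fun k hk => ?_
  rw [Finset.prod_Ico_succ_top (by simpa [Nat.lt_succ_iff] using hk)]
  ring

theorem neg_one_pow_mul_muZ_succ (m : ℕ) (a : ℕ → ℕ) :
    (-1) ^ (m + 1) * muZ (m + 1) a = 1 - a m * ((-1) ^ m * muZ m a) := by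
  have hsq : ∀ j : ℕ, (-1 : ℤ) ^ j * (-1) ^ j = 1 := fun j => by rw [← mul_pow]; simp
  rw [muZ_succ]
  linear_combination hsq (m + 1)

section Weights

variable {G₀ : Type*} [CommGroupWithZero G₀] {ζ : G₀} {n : ℕ} {a : ℕ → ℕ} {lam : ℕ → G₀}

theorem eq_zpow_neg_one_pow_mul_muZ (hζ : ζ ≠ 0) (h0 : lam 0 = ζ)
    (hrec : ∀ k, k + 1 < n → lam (k + 1) = ζ * lam k ^ (-(a k : ℤ))) :
    ∀ k < n, lam k = ζ ^ ((-1) ^ k * muZ k a) := by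
  intro k
  induction k with
  | zero => simp [h0, muZ_zero]
  | succ k ih =>
    intro hk
    rw [hrec k hk, ih (by omega), ← zpow_mul, ← zpow_one_add₀ hζ, neg_one_pow_mul_muZ_succ]
    ring_nf

theorem pow_mul_succ_eq_of_rec (hζ : ζ ≠ 0) (h0 : lam 0 = ζ)
    (hrec : ∀ k, k + 1 < n → lam (k + 1) = ζ * lam k ^ (-(a k : ℤ))) {k : ℕ} (hk : k + 1 < n) :
    lam k ^ a k * lam (k + 1) = ζ := by
  have hne : lam k ≠ 0 := by
    rw [eq_zpow_neg_one_pow_mul_muZ hζ h0 hrec k (by omega)]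
    exact zpow_ne_zero _ hζ
  rw [hrec k hk, zpow_neg, zpow_natCast, mul_left_comm, mul_inv_cancel₀ (pow_ne_zero _ hne),
    mul_one]

theorem pow_pred_eq_of_rec (hζ : ζ ≠ 0) (hμ : ζ ^ muZ n a = 1) (hn : 1 ≤ n) (h0 : lam 0 = ζ)
    (hrec : ∀ k, k + 1 < n → lam (k + 1) = ζ * lam k ^ (-(a k : ℤ))) :
    lam (n - 1) ^ a (n - 1) = ζ := by
  obtain ⟨m, rfl⟩ : ∃ m, n = m + 1 := ⟨n - 1, by omega⟩
  have hexp : (-1) ^ m * muZ m a * a m = 1 - (-1) ^ (m + 1) * muZ (m + 1) a := by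
    rw [neg_one_pow_mul_muZ_succ]; ring
  rw [Nat.add_sub_cancel, eq_zpow_neg_one_pow_mul_muZ hζ h0 hrec m (by omega), ← zpow_natCast,
    ← zpow_mul, hexp, zpow_sub₀ hζ, zpow_one, mul_comm, zpow_mul, hμ, one_zpow, div_one]

end Weights

theorem chainP_mul_eq (n : ℕ) (a : ℕ → ℕ) {lam : ℕ → ℂ} {ζ : ℂ}
    (hchain : ∀ k, k + 1 < n → lam k ^ a k * lam (k + 1) = ζ)
    (hlast : lam (n - 1) ^ a (n - 1) = ζ) (z : ℕ → ℂ) :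
    chainP n a (fun i => lam i * z i) = ζ * chainP n a z := by
  unfold chainP
  rw [mul_add, Finset.mul_sum]
  congr 1
  · refine Finset.sum_congr rfl fun k hk => ?_
    have h := hchain k (by have := Finset.mem_range.mp hk; omega)
    rw [mul_pow, ← h]
    ring
  · rw [mul_pow, hlast]
    ring

theorem gMap_mul_eq {n : ℕ} (hn : 2 ≤ n) (a : ℕ → ℕ) {lam : ℕ → ℂ} {ζ : ℂ} (h0 : lam 0 = ζ)
    (hchain : ∀ k, k + 1 < n → lam k ^ a k * lam (k + 1) = ζ)
    (hlast : lam (n - 1) ^ a (n - 1) = ζ) (t s : ℂ) (z : ℕ → ℂ) :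
    gMap n a t (lam 0 ^ a 0 * s) (fun i => lam i * z i) = ζ * gMap n a t s z := by
  have hshift : chainP (n - 1) (fun i => a (i + 1)) (fun i => lam (i + 1) * z (i + 1))
      = ζ * chainP (n - 1) (fun i => a (i + 1)) (fun i => z (i + 1)) :=
    chainP_mul_eq (n - 1) _ (fun k hk => hchain (k + 1) (by omega))
      (by rw [show n - 1 - 1 + 1 = n - 1 by omega]; exact hlast) _
  have h01 := hchain 0 (by omega)
  unfold gMap
  rw [hshift, mul_pow]
  linear_combination z 0 * h0 - (s * z 1 + t * z 0 ^ a 0 * z 1) * h01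

theorem exp_two_pi_I_div_zpow_self (m : ℤ) :
    Complex.exp (2 * Real.pi * Complex.I / m) ^ m = 1 := by
  rcases eq_or_ne m 0 with rfl | hm
  · simp
  · rw [← Complex.exp_int_mul, mul_div_cancel₀ _ (Int.cast_ne_zero.mpr hm),
      Complex.exp_two_pi_mul_I]

theorem stmt_6_general (n : ℕ) (hn : 2 ≤ n) (a : ℕ → ℕ)
    (lam : ℕ → ℂ)
    (hlam0 : lam 0 = Complex.exp (2 * (Real.pi : ℂ) * Complex.I / (muZ n a : ℂ)))
    (hlamrec : ∀ k : ℕ, k + 1 < n →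
      lam (k + 1)
        = Complex.exp (2 * (Real.pi : ℂ) * Complex.I / (muZ n a : ℂ))
            * lam k ^ (-(a k : ℤ))) :
    lam (n - 1) ^ a (n - 1)
        = Complex.exp (2 * (Real.pi : ℂ) * Complex.I / (muZ n a : ℂ)) ∧
    ∀ t s : ℂ, ∀ z : ℕ → ℂ,
      gMap n a t
          (Complex.exp (((2 * Real.pi * (a 0 : ℝ) / (muZ n a : ℝ) : ℝ) : ℂ) * Complex.I) * s)
          (fun i => lam i * z i)
        = Complex.exp (2 * (Real.pi : ℂ) * Complex.I / (muZ n a : ℂ))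
            * gMap n a t s z := by
  have hζ := Complex.exp_ne_zero (2 * Real.pi * Complex.I / (muZ n a : ℂ))
  have hlast := pow_pred_eq_of_rec hζ (exp_two_pi_I_div_zpow_self _) (by omega) hlam0 hlamrec
  have hθ : Complex.exp (((2 * Real.pi * (a 0 : ℝ) / (muZ n a : ℝ) : ℝ) : ℂ) * Complex.I)
      = lam 0 ^ a 0 := by
    rw [hlam0, ← Complex.exp_nat_mul]
    push_cast
    ring_nf
  refine ⟨hlast, fun t s z => ?_⟩
  rw [hθ]
  exact gMap_mul_eq hn a hlam0 (fun k hk => pow_mul_succ_eq_of_rec hζ hlam0 hlamrec hk) hlast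
    t s z

theorem stmt_6 (n : ℕ) (hn : 2 ≤ n) (a : ℕ → ℕ) (ha : ∀ i < n, 2 ≤ a i)
    (lam : ℕ → ℂ)
    (hlam0 : lam 0 = Complex.exp (2 * (Real.pi : ℂ) * Complex.I / (muZ n a : ℂ)))
    (hlamrec : ∀ k : ℕ, k + 1 < n →
      lam (k + 1)
        = Complex.exp (2 * (Real.pi : ℂ) * Complex.I / (muZ n a : ℂ))
            * lam k ^ (-(a k : ℤ))) :
    lam (n - 1) ^ a (n - 1)
        = Complex.exp (2 * (Real.pi : ℂ) * Complex.I / (muZ n a : ℂ)) ∧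
    ∀ t s : ℂ, ∀ z : ℕ → ℂ,
      gMap n a t
          (Complex.exp (((2 * Real.pi * (a 0 : ℝ) / (muZ n a : ℝ) : ℝ) : ℂ) * Complex.I) * s)
          (fun i => lam i * z i)
        = Complex.exp (2 * (Real.pi : ℂ) * Complex.I / (muZ n a : ℂ))
            * gMap n a t s z :=
  stmt_6_general n hn a lam hlam0 hlamrec
end

section
/- Let n ≥ 1 and let a = (a_1,…,a_n) be a tuple of integers with each a_i ≥ 2. There exists a real number r > 0, depending only on a, such that for every point z = (z_1,…,z_n) ∈ ℂ^n satisfying ∂p_a/∂z_i(z) = 0 for all i with 2 ≤ i ≤ n, the determinant of the Hessian matrix satisfies det( ∂²p_a/∂z_i∂z_j (z) )_{1≤i,j≤n} = (−1)^{n(n+1)/2} · r · z_1^{a_1−2} z_2^{a_2−1} ⋯ z_n^{a_n−1}. -/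
/-!
Put `y_k = z_k` for `k < n` and `y_n = 1`. Then `p_a` is the uniform chain
`∑_{k<n} (-1)^(k+1) y_k^(a_k) y_(k+1)`, whose Hessian is symmetric tridiagonal with diagonal
`d_k = ±a_k(a_k-1) y_k^(a_k-2) y_(k+1)` and off-diagonal `e_k = ±a_k y_k^(a_k-1)`.
The determinants `D_j` of the trailing blocks satisfy `D_j = d_j D_(j+1) - e_j^2 D_(j+2)`.
At a critical point `y_j^(a_j) = a_(j+1) y_(j+1)^(a_(j+1)-1) y_(j+2)`, so `e_j^2` is a multiple
of the monomial of `d_j D_(j+1)`, and downward induction gives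
`D_j = ± r_j y_j^(a_j-2) ∏_(i>j) y_i^(a_i-1)` with
`r_j = a_j(a_j-1) r_(j+1) + a_j^2 a_(j+1) r_(j+2)`: the two contributions carry the same sign,
so `r_j > 0`.
-/

open scoped BigOperators

/-- The complex partial derivative of `f` with respect to the `i`-th coordinate at `z`. -/
noncomputable def pd (f : (ℕ → ℂ) → ℂ) (i : ℕ) (z : ℕ → ℂ) : ℂ :=
  deriv (fun w => f (Function.update z i w)) (z i)

namespace Matrix

variable {R : Type*} [CommRing R]

def symmTridiag (d e : ℕ → R) (m : ℕ) : Matrix (Fin m) (Fin m) R :=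
  of fun i k => if (i : ℕ) = k then d i else if (i : ℕ) + 1 = k then e i
    else if (k : ℕ) + 1 = i then e k else 0

theorem symmTridiag_submatrix_succ (d e : ℕ → R) (m : ℕ) :
    (symmTridiag d e (m + 1)).submatrix Fin.succ Fin.succ
      = symmTridiag (fun i => d (i + 1)) (fun i => e (i + 1)) m := by
  ext i k
  simp [symmTridiag]

theorem det_symmTridiag_succ_succ (d e : ℕ → R) (m : ℕ) :
    (symmTridiag d e (m + 2)).det
      = d 0 * (symmTridiag (fun i => d (i + 1)) (fun i => e (i + 1)) (m + 1)).det
        - e 0 ^ 2 * (symmTridiag (fun i => d (i + 2)) (fun i => e (i + 2)) m).det := by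
  set A := symmTridiag d e (m + 2)
  have hminor : (A.submatrix Fin.succ (Fin.succAbove 1)).det
      = e 0 * (symmTridiag (fun i => d (i + 2)) (fun i => e (i + 2)) m).det := by
    rw [det_succ_column_zero, Fin.sum_univ_succ, Finset.sum_eq_zero]
    · have : ((A.submatrix Fin.succ (Fin.succAbove 1)).submatrix (Fin.succAbove 0) Fin.succ)
          = (A.submatrix Fin.succ Fin.succ).submatrix Fin.succ Fin.succ := by
        ext i k; simp [Fin.succAbove_of_le_castSucc, Fin.le_def]
      rw [this, symmTridiag_submatrix_succ, symmTridiag_submatrix_succ]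
      simp [A, symmTridiag]
    · intro i _
      simp [A, symmTridiag]
  rw [det_succ_row_zero, Fin.sum_univ_succ, Fin.sum_univ_succ, Finset.sum_eq_zero]
  · rw [Fin.succAbove_zero, symmTridiag_submatrix_succ, Fin.succ_zero_eq_one, hminor]
    simp [A, symmTridiag]
    ring
  · intro k _
    simp [A, symmTridiag]

theorem det_symmTridiag_shift_succ_succ (d e : ℕ → R) (j m : ℕ) :
    (symmTridiag (fun i => d (j + i)) (fun i => e (j + i)) (m + 2)).det
      = d j * (symmTridiag (fun i => d (j + 1 + i)) (fun i => e (j + 1 + i)) (m + 1)).det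
        - e j ^ 2 * (symmTridiag (fun i => d (j + 2 + i)) (fun i => e (j + 2 + i)) m).det := by
  simpa only [add_zero, add_assoc, add_comm 1, add_comm 2]
    using det_symmTridiag_succ_succ (fun i => d (j + i)) (fun i => e (j + i)) m

end Matrix

open MvPolynomial Matrix

section
variable {σ 𝕜 : Type*} [DecidableEq σ] [NontriviallyNormedField 𝕜]

theorem hasDerivAt_update_apply (y : σ → 𝕜) (i k : σ) :
    HasDerivAt (fun w => Function.update y i w k) ((Pi.single i 1 : σ → 𝕜) k) (y i) := by
  by_cases hk : k = i
  · subst hk; simpa using hasDerivAt_id' (y k)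
  · simpa [Function.update_of_ne hk, Pi.single_apply, hk] using hasDerivAt_const (y i) (y k)

theorem MvPolynomial.hasDerivAt_eval_update (P : MvPolynomial σ 𝕜) (y : σ → 𝕜) (i : σ) :
    HasDerivAt (fun w => eval (Function.update y i w) P) (eval y (pderiv i P)) (y i) := by
  induction P using MvPolynomial.induction_on with
  | C c => simpa using hasDerivAt_const (y i) c
  | add P Q hP hQ => simpa using hP.fun_add hQ
  | mul_X P k hP =>
    have := hP.fun_mul (hasDerivAt_update_apply y i k)
    simp only [Function.update_eq_self] at this
    simp only [map_mul, eval_X, Derivation.leibniz, pderiv_X, map_add, smul_eq_mul]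
    refine this.congr_deriv ?_
    rw [Pi.single_apply, Pi.single_apply]
    split_ifs <;> simp only [map_one, map_zero, mul_one, mul_zero] <;> ring
end

-- Padding by `1` turns the special last term of `chainP` into an ordinary link of the chain.
def padOne (n : ℕ) (z : ℕ → ℂ) (k : ℕ) : ℂ := if k < n then z k else 1

theorem padOne_of_lt {n k : ℕ} (hk : k < n) (z : ℕ → ℂ) : padOne n z k = z k := if_pos hk

theorem padOne_update {n i : ℕ} (hi : i < n) (z : ℕ → ℂ) (w : ℂ) :
    padOne n (Function.update z i w) = Function.update (padOne n z) i w := by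
  ext k
  by_cases hk : k = i
  · subst hk; simp [padOne, hi]
  · simp [padOne, hk]

theorem pd_eval_padOne {n i : ℕ} (hi : i < n) (P : MvPolynomial ℕ ℂ) (z : ℕ → ℂ) :
    pd (fun z => eval (padOne n z) P) i z = eval (padOne n z) (pderiv i P) := by
  have h := (MvPolynomial.hasDerivAt_eval_update P (padOne n z) i).deriv
  rw [padOne_of_lt hi] at h
  simpa only [pd, padOne_update hi] using h

noncomputable def chainPoly (n : ℕ) (a : ℕ → ℕ) : MvPolynomial ℕ ℂ :=
  ∑ k ∈ Finset.range n, (-1) ^ (k + 1) * X k ^ a k * X (k + 1)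

theorem chainP_eq_eval_padOne {n : ℕ} (hn : 1 ≤ n) (a : ℕ → ℕ) :
    chainP n a = fun z => eval (padOne n z) (chainPoly n a) := by
  obtain ⟨n, rfl⟩ := Nat.exists_eq_add_of_le' hn
  ext z
  simp [chainP, chainPoly, padOne, Finset.sum_range_succ]
  refine Finset.sum_congr rfl fun k hk => ?_
  have hk := Finset.mem_range.mp hk
  simp [hk, hk.le]

theorem pd_chainP {n j : ℕ} (hn : 1 ≤ n) (a : ℕ → ℕ) (hj : j < n) :
    pd (chainP n a) j = fun z => eval (padOne n z) (pderiv j (chainPoly n a)) := by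
  ext z
  rw [chainP_eq_eval_padOne hn, pd_eval_padOne hj]

theorem pderiv_chainPoly {n j : ℕ} (a : ℕ → ℕ) (hj : j < n) :
    pderiv j (chainPoly n a)
      = (-1) ^ (j + 1) * (a j : MvPolynomial ℕ ℂ) * X j ^ (a j - 1) * X (j + 1)
        + if j = 0 then 0 else (-1) ^ j * X (j - 1) ^ a (j - 1) := by
  simp only [chainPoly, map_sum, Derivation.leibniz, Derivation.leibniz_pow, pderiv_X,
    Pi.single_apply, smul_eq_mul]
  cases j with
  | zero => simp [hj]; ring
  | succ j => simp [Finset.sum_add_distrib, hj, show j < n by omega]; ring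

theorem padOne_pow_eq_of_pd_chainP_eq_zero {n k : ℕ} (hn : 1 ≤ n) (a : ℕ → ℕ)
    (hk : k + 2 ≤ n) {z : ℕ → ℂ} (h : pd (chainP n a) (k + 1) z = 0) :
    padOne n z k ^ a k
      = a (k + 1) * padOne n z (k + 1) ^ (a (k + 1) - 1) * padOne n z (k + 2) := by
  rw [pd_chainP hn a (by omega), pderiv_chainPoly a (by omega)] at h
  simp only [map_add, map_mul, map_pow, map_neg, map_one, map_natCast, eval_X,
    Nat.add_sub_cancel, Nat.add_one_ne_zero, if_false] at h
  have h' : (-1 : ℂ) ^ (k + 1) * (padOne n z k ^ a k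
      - a (k + 1) * padOne n z (k + 1) ^ (a (k + 1) - 1) * padOne n z (k + 2)) = 0 := by
    linear_combination h
  simpa [sub_eq_zero] using h'

noncomputable def chainHessDiag (a : ℕ → ℕ) (y : ℕ → ℂ) (k : ℕ) : ℂ :=
  (-1) ^ (k + 1) * (a k * (a k - 1) : ℕ) * y k ^ (a k - 2) * y (k + 1)

noncomputable def chainHessOff (a : ℕ → ℕ) (y : ℕ → ℂ) (k : ℕ) : ℂ :=
  (-1) ^ (k + 1) * a k * y k ^ (a k - 1)

theorem eval_pderiv_pderiv_chainPoly {n : ℕ} (a : ℕ → ℕ) (y : ℕ → ℂ) (i j : Fin n) :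
    eval y (pderiv (i : ℕ) (pderiv (j : ℕ) (chainPoly n a)))
      = symmTridiag (chainHessDiag a y) (chainHessOff a y) n i j := by
  rw [pderiv_chainPoly a j.isLt]
  obtain ⟨i, hi⟩ := i
  obtain ⟨j, hj⟩ := j
  simp only [symmTridiag, chainHessDiag, chainHessOff, of_apply]
  split_ifs <;> subst_vars <;>
    simp [Derivation.leibniz, Derivation.leibniz_pow, pderiv_X, Pi.single_apply, Nat.sub_sub,
      *] <;>
    (try split_ifs) <;> first | omega | ((try simp only [map_zero]); ring1) | simp_all

theorem pd_pd_chainP {n : ℕ} (hn : 1 ≤ n) (a : ℕ → ℕ) (z : ℕ → ℂ) :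
    (of fun i j : Fin n => pd (pd (chainP n a) (j : ℕ)) (i : ℕ) z)
      = symmTridiag (chainHessDiag a (padOne n z)) (chainHessOff a (padOne n z)) n := by
  ext i j
  rw [of_apply, pd_chainP hn a j.isLt, pd_eval_padOne i.isLt, eval_pderiv_pderiv_chainPoly]

-- `chainConst a j m` is the constant `r` of the `m × m` Hessian block starting at index `j`.
def chainConst (a : ℕ → ℕ) : ℕ → ℕ → ℕ
  | _, 0 => 1
  | j, 1 => a j * (a j - 1)
  | j, m + 2 =>
    a j * (a j - 1) * chainConst a (j + 1) (m + 1) + a j ^ 2 * a (j + 1) * chainConst a (j + 2) m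

theorem chainConst_pos (a : ℕ → ℕ) :
    ∀ j m, (∀ i, j ≤ i → i < j + m → 2 ≤ a i) → 0 < chainConst a j m
  | _, 0, _ => Nat.one_pos
  | j, 1, ha => by
    have := ha j le_rfl (by omega)
    exact Nat.mul_pos (by omega) (by omega)
  | j, m + 2, ha => by
    have := ha j le_rfl (by omega)
    have := chainConst_pos a (j + 1) (m + 1) fun i hi hi' => ha i (by omega) (by omega)
    exact Nat.add_pos_left (Nat.mul_pos (Nat.mul_pos (by omega) (by omega)) this) _

section Determinant

variable {n : ℕ} {a : ℕ → ℕ} {y : ℕ → ℂ}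

theorem mul_pow_sub_two_mul_prod_Ico (hy : y n = 1) (ha : ∀ i < n, 2 ≤ a i) {k : ℕ}
    (hk : k ≤ n) :
    y k * (y k ^ (a k - 2) * ∏ i ∈ Finset.Ico (k + 1) n, y i ^ (a i - 1))
      = ∏ i ∈ Finset.Ico k n, y i ^ (a i - 1) := by
  rcases hk.lt_or_eq with hk | rfl
  · rw [Finset.prod_eq_prod_Ico_succ_bot hk, ← mul_assoc, ← pow_succ']
    congr 3
    have := ha k hk
    omega
  · simp [hy]

theorem det_symmTridiag_chainHess (hy : y n = 1) (ha : ∀ i < n, 2 ≤ a i)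
    (hrel : ∀ k, k + 2 ≤ n →
      y k ^ a k = a (k + 1) * y (k + 1) ^ (a (k + 1) - 1) * y (k + 2)) :
    ∀ m j, j + m = n →
      (symmTridiag (fun i => chainHessDiag a y (j + i)) (fun i => chainHessOff a y (j + i)) m).det
        = (-1) ^ (∑ i ∈ Finset.Ico j n, (i + 1)) * chainConst a j m * y j ^ (a j - 2)
          * ∏ i ∈ Finset.Ico (j + 1) n, y i ^ (a i - 1)
  | 0, j, h => by
    obtain rfl : j = n := by omega
    simp [chainConst, hy]
  | 1, j, h => by
    subst h
    simp [symmTridiag, chainHessDiag, chainConst, hy]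
  | m + 2, j, h => by
    have he : y j ^ (a j - 1) * y j ^ (a j - 1)
        = y j ^ (a j - 2) * (a (j + 1) * y (j + 1) ^ (a (j + 1) - 1) * y (j + 2)) := by
      rw [← hrel j (by omega), ← pow_add, ← pow_add]
      have := ha j (by omega)
      congr 1
      omega
    have hpow : y (j + 1) * y (j + 1) ^ (a (j + 1) - 2) = y (j + 1) ^ (a (j + 1) - 1) := by
      rw [← pow_succ']
      have := ha (j + 1) (by omega)
      congr 1
      omega
    have hP1 := mul_pow_sub_two_mul_prod_Ico hy ha (k := j + 1) (by omega)
    have hP2 := mul_pow_sub_two_mul_prod_Ico hy ha (k := j + 2) (by omega)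
    have hs0 : (-1 : ℂ) ^ (∑ i ∈ Finset.Ico j n, (i + 1))
        = (-1) ^ (j + 1) * (-1) ^ (∑ i ∈ Finset.Ico (j + 1) n, (i + 1)) := by
      rw [Finset.sum_eq_sum_Ico_succ_bot (by omega), pow_add]
    have hs1 : (-1 : ℂ) ^ (∑ i ∈ Finset.Ico (j + 1) n, (i + 1))
        = (-1) ^ (j + 2) * (-1) ^ (∑ i ∈ Finset.Ico (j + 2) n, (i + 1)) := by
      rw [Finset.sum_eq_sum_Ico_succ_bot (by omega), pow_add]
    rw [det_symmTridiag_shift_succ_succ,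
      det_symmTridiag_chainHess hy ha hrel (m + 1) (j + 1) (by omega),
      det_symmTridiag_chainHess hy ha hrel m (j + 2) (by omega), hs0, hs1, ← hP1, ← hP2,
      chainConst]
    simp only [chainHessDiag, chainHessOff]
    push_cast
    linear_combination ((-1) ^ (j + 1)) ^ 2 * (-1) ^ (∑ i ∈ Finset.Ico (j + 2) n, (i + 1))
      * (a j : ℂ) ^ 2 * (chainConst a (j + 2) m : ℂ) * y (j + 2) ^ (a (j + 2) - 2)
      * (∏ i ∈ Finset.Ico (j + 3) n, y i ^ (a i - 1))
      * ((a (j + 1) : ℂ) * y j ^ (a j - 2) * y (j + 2) * hpow - he)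

end Determinant

theorem sum_range_add_one (n : ℕ) : ∑ i ∈ Finset.range n, (i + 1) = n * (n + 1) / 2 := by
  rw [← add_zero (∑ i ∈ Finset.range n, (i + 1)), ← Finset.sum_range_succ' (fun i => i),
    Finset.sum_range_id, Nat.add_sub_cancel, mul_comm]

/-- There is `r > 0` depending only on `a` such that at every point where
`∂p_a/∂z_i = 0` for `2 ≤ i ≤ n`, the Hessian determinant of `p_a` equals
`(−1)^{n(n+1)/2} · r · z_1^{a_1−2} z_2^{a_2−1} ⋯ z_n^{a_n−1}`. -/
theorem stmt_9 (n : ℕ) (hn : 1 ≤ n) (a : ℕ → ℕ) (ha : ∀ i < n, 2 ≤ a i) :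
    ∃ r : ℝ, 0 < r ∧ ∀ z : ℕ → ℂ,
      (∀ i : ℕ, 1 ≤ i → i < n → pd (chainP n a) i z = 0) →
      Matrix.det (Matrix.of fun i j : Fin n => pd (pd (chainP n a) (j : ℕ)) (i : ℕ) z)
        = (-1 : ℂ) ^ (n * (n + 1) / 2) * (r : ℂ) * z 0 ^ (a 0 - 2)
            * ∏ i ∈ Finset.Ico 1 n, z i ^ (a i - 1) := by
  refine ⟨chainConst a 0 n, by exact_mod_cast chainConst_pos a 0 n fun i _ hi => ha i (by omega),
    fun z hz => ?_⟩
  have hdet := det_symmTridiag_chainHess (y := padOne n z) (by simp [padOne]) ha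
    (fun k hk => padOne_pow_eq_of_pd_chainP_eq_zero hn a hk (hz (k + 1) (by omega) (by omega)))
    n 0 (zero_add n)
  simp only [zero_add, ← Finset.range_eq_Ico, sum_range_add_one] at hdet
  rw [pd_pd_chainP hn, hdet, padOne_of_lt hn,
    Finset.prod_congr rfl fun i hi => by rw [padOne_of_lt (Finset.mem_Ico.mp hi).2]]
  norm_cast
end

section
/- Let n ≥ 2 and let a = (a_1,…,a_n) be a tuple of integers with each a_i ≥ 2. There exists a positive rational number c_a, depending only on a, such that for all t, s ∈ ℂ and every z = (z_1,…,z_n) ∈ ℂ^n satisfying ∂g_a^{t,s}/∂z_j(z) = 0 for all j with 2 ≤ j ≤ n, setting y := g_a^{t,s}(z), one has c_a·(s + t·z_1^{a_1})^{d(−a)} = (z_1 − y)^{μ(−a)}. -/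
open scoped BigOperators

/-- `d(a) = a_1 ⋯ a_n` (0-based). -/
def dd (n : ℕ) (a : ℕ → ℕ) : ℕ := ∏ i ∈ Finset.range n, a i

/-! Put `w := s + t z_1^{a_1}`, `b := −a` and `V := (z_2, …, z_n, 1)`. The equations
`∂g/∂z_j = 0` for `2 ≤ j ≤ n` say `w = b_1 V_1^{b_1-1} V_2` and
`V_l^{b_l} = b_{l+1} V_{l+1}^{b_{l+1}-1} V_{l+2}`, so every monomial of `z_1 − y` is a rational
multiple of `w V_1`, and summing these multiples gives `d(b) (z_1 − y) = μ(b) w V_1`.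
Eliminating `V_n, V_{n-1}, …` from the top of the chain shows that `w^{μ(−b)}` is a
positive rational multiple of `V_1^{μ(b)}`. Since `μ(b) + μ(−b) = d(b)`, raising the first
identity to the power `μ(b)` gives the theorem. -/

open Finset Function

def milnorNat : ℕ → (ℕ → ℕ) → ℕ
  | 0, _ => 1
  | r + 1, b => dd (r + 1) b - milnorNat r (fun i => b (i + 1))

theorem dd_succ (r : ℕ) (b : ℕ → ℕ) : dd (r + 1) b = b 0 * dd r (fun i => b (i + 1)) := by
  rw [dd, dd, prod_range_succ', mul_comm]

theorem muZ_succ_s10 (r : ℕ) (b : ℕ → ℕ) :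
    muZ (r + 1) b = dd (r + 1) b - muZ r (fun i => b (i + 1)) := by
  rw [muZ, sum_range_succ', muZ, dd, sub_eq_add_neg, ← sum_neg_distrib, add_comm]
  simp only [pow_zero, one_mul, Nat.Ico_zero_eq_range, Nat.cast_prod]
  congr 1
  refine sum_congr rfl fun k _ => ?_
  rw [prod_Ico_add' (fun i => (b i : ℤ)) k r 1]
  ring

theorem milnorNat_le_dd (r : ℕ) (b : ℕ → ℕ) : milnorNat r b ≤ dd r b := by
  cases r with
  | zero => simp [milnorNat, dd]
  | succ r => exact Nat.sub_le _ _

theorem milnorNat_add_milnorNat (r : ℕ) {b : ℕ → ℕ} (hb : 0 < b 0) :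
    milnorNat (r + 1) b + milnorNat r (fun i => b (i + 1)) = dd (r + 1) b := by
  refine Nat.sub_add_cancel ((milnorNat_le_dd r _).trans ?_)
  rw [dd_succ]
  exact Nat.le_mul_of_pos_left _ hb

theorem milnorNat_eq_muZ (r : ℕ) {b : ℕ → ℕ} (hb : ∀ i < r, 0 < b i) :
    (milnorNat r b : ℤ) = muZ r b := by
  induction r generalizing b with
  | zero => simp [milnorNat, muZ]
  | succ r ih =>
    have hsum := milnorNat_add_milnorNat r (hb 0 r.succ_pos)
    rw [muZ_succ_s10, ← ih fun i hi => hb (i + 1) (by omega)]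
    omega

theorem milnorNat_succ_succ (r : ℕ) {b : ℕ → ℕ} (hb0 : 0 < b 0) (hb1 : 0 < b 1) :
    milnorNat (r + 2) b = (b 0 - 1) * milnorNat (r + 1) (fun i => b (i + 1))
      + b 0 * milnorNat r (fun i => b (i + 1 + 1)) := by
  have h0 := milnorNat_add_milnorNat (r + 1) hb0
  have h1 := milnorNat_add_milnorNat r (b := fun i => b (i + 1)) hb1
  rw [dd_succ (r + 1), ← h1] at h0
  zify [hb0] at h0 ⊢
  linear_combination h0

def chainSum (r : ℕ) (b : ℕ → ℕ) (V : ℕ → ℂ) : ℂ :=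
  ∑ k ∈ range r, (-1) ^ (k + 1) * V k ^ b k * V (k + 1)

theorem chainSum_succ (r : ℕ) (b : ℕ → ℕ) (V : ℕ → ℂ) :
    chainSum (r + 1) b V
      = -(V 0 ^ b 0 * V 1) - chainSum r (fun i => b (i + 1)) (fun i => V (i + 1)) := by
  rw [chainSum, chainSum, sum_range_succ', sub_eq_add_neg, ← sum_neg_distrib, add_comm]
  simp only [pow_succ, pow_zero, one_mul, zero_add, mul_neg_one, neg_mul, neg_neg]

theorem chainP_eq_chainSum {r : ℕ} (hr : 0 < r) (b : ℕ → ℕ) (v : ℕ → ℂ) :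
    chainP r b v = chainSum r b (update v r 1) := by
  obtain ⟨r, rfl⟩ := Nat.exists_eq_add_of_lt hr
  rw [chainP, chainSum, zero_add, sum_range_succ, Nat.add_sub_cancel, update_self,
    update_of_ne (by omega), mul_one]
  congr 1
  refine sum_congr rfl fun k hk => ?_
  rw [update_of_ne (by simp at hk; omega), update_of_ne (by simp at hk; omega)]

theorem hasDerivAt_update_apply_s10 (V : ℕ → ℂ) (l k : ℕ) (x : ℂ) :
    HasDerivAt (fun y => update V l y k) (if k = l then 1 else 0) x := by
  by_cases h : k = l
  · subst h; simpa using hasDerivAt_id' x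
  · simpa [h] using hasDerivAt_const x (V k)

theorem hasDerivAt_chainSum_update (r : ℕ) (b : ℕ → ℕ) (V : ℕ → ℂ) (l : ℕ) :
    HasDerivAt (fun x => chainSum r b (update V l x))
      (∑ k ∈ range r, (-1) ^ (k + 1) *
        ((if k = l then b k * V k ^ (b k - 1) * V (k + 1) else 0)
          + if k + 1 = l then V k ^ b k else 0)) (V l) := by
  unfold chainSum
  refine HasDerivAt.fun_sum fun k _ => ?_
  refine ((((hasDerivAt_update_apply_s10 V l k (V l)).fun_pow (b k)).const_mul
    ((-1 : ℂ) ^ (k + 1))).fun_mul (hasDerivAt_update_apply_s10 V l (k + 1) (V l))).congr_deriv ?_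
  simp only [update_eq_self]
  split_ifs <;> ring

theorem hasDerivAt_chainSum_update_zero {r : ℕ} (hr : 0 < r) (b : ℕ → ℕ) (V : ℕ → ℂ) :
    HasDerivAt (fun x => chainSum r b (update V 0 x)) (-(b 0 * V 0 ^ (b 0 - 1) * V 1)) (V 0) := by
  convert hasDerivAt_chainSum_update r b V 0 using 1
  simp [hr]

theorem hasDerivAt_chainSum_update_succ {r l : ℕ} (hl : l + 1 < r) (b : ℕ → ℕ)
    (V : ℕ → ℂ) :
    HasDerivAt (fun x => chainSum r b (update V (l + 1) x))
      ((-1) ^ (l + 1) * (V l ^ b l - b (l + 1) * V (l + 1) ^ (b (l + 1) - 1) * V (l + 2)))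
      (V (l + 1)) := by
  convert hasDerivAt_chainSum_update r b V (l + 1) using 1
  simp only [mul_add, sum_add_distrib, mul_ite, mul_zero, sum_ite_eq', add_left_inj, mem_range, hl,
    (by omega : l < r), if_true]
  ring

-- `(z_2, …, z_n)` padded with `1` in position `n`: this turns the last monomial `± z_n^{a_n}`
-- of `p_{−a}` into one of the same shape `± V_k^{b_k} V_{k+1}` as the others.
def chainVars (n : ℕ) (z : ℕ → ℂ) : ℕ → ℂ := update (fun i => z (i + 1)) (n - 1) 1

theorem chainVars_update {n l : ℕ} (hl : l + 1 < n) (z : ℕ → ℂ) (x : ℂ) :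
    chainVars n (update z (l + 1) x) = update (chainVars n z) l x := by
  have hshift : (fun i => update z (l + 1) x (i + 1)) = update (fun i => z (i + 1)) l x :=
    update_comp_eq_of_injective z Nat.succ_injective l x
  rw [chainVars, chainVars, hshift, update_comm (by omega)]

theorem gMap_eq {n : ℕ} (hn : 2 ≤ n) (a : ℕ → ℕ) (t s : ℂ) (z : ℕ → ℂ) :
    gMap n a t s z = z 0 - (s + t * z 0 ^ a 0) * chainVars n z 0
      - chainSum (n - 1) (fun i => a (i + 1)) (chainVars n z) := by
  rw [gMap, chainP_eq_chainSum (by omega), chainVars, update_of_ne (by omega)]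
  ring

theorem pd_gMap_succ {n l : ℕ} (hl : l + 1 < n) (a : ℕ → ℕ) (t s : ℂ)
    (z : ℕ → ℂ) {D : ℂ}
    (hD : HasDerivAt (fun x => chainSum (n - 1) (fun i => a (i + 1))
      (update (chainVars n z) l x)) D (chainVars n z l)) :
    pd (gMap n a t s) (l + 1) z = -(s + t * z 0 ^ a 0) * (if l = 0 then 1 else 0) - D := by
  have hfun : (fun x => gMap n a t s (update z (l + 1) x)) = fun x =>
      z 0 - (s + t * z 0 ^ a 0) * update (chainVars n z) l x 0
        - chainSum (n - 1) (fun i => a (i + 1)) (update (chainVars n z) l x) := by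
    funext x
    rw [gMap_eq (by omega), chainVars_update hl, update_of_ne (by omega)]
  have hpt : z (l + 1) = chainVars n z l :=
    (update_of_ne (by omega : l ≠ n - 1) 1 (fun i => z (i + 1))).symm
  rw [pd, hfun, hpt]
  refine (((hasDerivAt_update_apply_s10 _ l 0 _).const_mul _).const_sub _ |>.sub hD).deriv.trans ?_
  simp only [eq_comm (a := 0)]
  ring

def IsChainCritical (r : ℕ) (b : ℕ → ℕ) (X : ℂ) (V : ℕ → ℂ) : Prop :=
  X = b 0 * V 0 ^ (b 0 - 1) * V 1 ∧
    ∀ l, l + 1 < r → V l ^ b l = b (l + 1) * V (l + 1) ^ (b (l + 1) - 1) * V (l + 2)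

theorem isChainCritical_of_pd_gMap_eq_zero {n : ℕ} (hn : 2 ≤ n) (a : ℕ → ℕ) (t s : ℂ)
    (z : ℕ → ℂ) (hz : ∀ j : ℕ, 1 ≤ j → j < n → pd (gMap n a t s) j z = 0) :
    IsChainCritical (n - 1) (fun i => a (i + 1)) (s + t * z 0 ^ a 0) (chainVars n z) := by
  constructor
  · have h := hz 1 le_rfl (by omega)
    rw [pd_gMap_succ (l := 0) (by omega) a t s z
      (hasDerivAt_chainSum_update_zero (by omega) _ _), if_pos rfl] at h
    linear_combination -h
  · intro l hl
    have h := hz (l + 2) (by omega) (by omega)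
    rw [pd_gMap_succ (l := l + 1) (by omega) a t s z
      (hasDerivAt_chainSum_update_succ hl _ _)] at h
    simpa [sub_eq_zero] using h

theorem IsChainCritical.tail {r : ℕ} {b : ℕ → ℕ} {X : ℂ} {V : ℕ → ℂ}
    (h : IsChainCritical (r + 1) b X V) (hr : 0 < r) :
    IsChainCritical r (fun i => b (i + 1)) (V 0 ^ b 0) (fun i => V (i + 1)) :=
  ⟨h.2 0 (by omega), fun l hl => h.2 (l + 1) (by omega)⟩

theorem IsChainCritical.mul_apply_zero {r : ℕ} {b : ℕ → ℕ} {X : ℂ} {V : ℕ → ℂ}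
    (h : IsChainCritical r b X V) (hb : 0 < b 0) : X * V 0 = b 0 * (V 0 ^ b 0 * V 1) := by
  rw [h.1, ← Nat.sub_add_cancel hb, pow_succ, Nat.add_sub_cancel]
  ring

theorem IsChainCritical.dd_mul_add_chainSum {r : ℕ} {b : ℕ → ℕ} {X : ℂ} {V : ℕ → ℂ}
    (h : IsChainCritical r b X V) (hr : 0 < r) (hb : ∀ i < r, 0 < b i) :
    (dd r b : ℂ) * (X * V 0 + chainSum r b V) = milnorNat r b * (X * V 0) := by
  induction r, hr using Nat.le_induction generalizing b X V with
  | base =>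
    have hX := h.mul_apply_zero (hb 0 one_pos)
    have hμ : ((milnorNat 1 b : ℕ) : ℂ) + 1 = dd 1 b := by
      exact_mod_cast milnorNat_add_milnorNat 0 (hb 0 one_pos)
    have hd : (dd 1 b : ℂ) = b 0 := by simp [dd]
    rw [chainSum_succ, chainSum, sum_range_zero]
    linear_combination hX - (V 0 ^ b 0 * V 1) * hd - X * V 0 * hμ
  | succ r hr ih =>
    have hX := h.mul_apply_zero (hb 0 r.succ_pos)
    have ih' := ih (h.tail hr) fun i hi => hb (i + 1) (by omega)
    have hμ :
        ((milnorNat (r + 1) b : ℕ) : ℂ) + milnorNat r (fun i => b (i + 1)) = dd (r + 1) b := by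
      exact_mod_cast milnorNat_add_milnorNat r (hb 0 r.succ_pos)
    have hd : (dd (r + 1) b : ℂ) = b 0 * dd r (fun i => b (i + 1)) := by
      exact_mod_cast dd_succ r b
    rw [chainSum_succ]
    linear_combination (milnorNat r (fun i => b (i + 1)) : ℂ) * hX
      - (V 0 ^ b 0 * V 1 + chainSum r (fun i => b (i + 1)) fun i => V (i + 1)) * hd
      - (b 0 : ℂ) * ih' - X * V 0 * hμ

theorem exists_mul_pow_eq_pow_milnorNat {r : ℕ} (hr : 0 < r) {b : ℕ → ℕ}
    (hb : ∀ i < r, 0 < b i) :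
    ∃ c : ℚ, 0 < c ∧ ∀ (X : ℂ) (V : ℕ → ℂ), V r = 1 → IsChainCritical r b X V →
      (c : ℂ) * X ^ milnorNat (r - 1) (fun i => b (i + 1)) = V 0 ^ milnorNat r b := by
  induction r, hr using Nat.le_induction generalizing b with
  | base =>
    have hb0 : (b 0 : ℂ) ≠ 0 := Nat.cast_ne_zero.mpr (hb 0 one_pos).ne'
    refine ⟨(b 0 : ℚ)⁻¹, inv_pos.mpr (Nat.cast_pos.mpr (hb 0 one_pos)), fun X V hV h => ?_⟩
    have hμ : milnorNat 1 b = b 0 - 1 := by simp [milnorNat, dd]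
    rw [hμ, Nat.sub_self, milnorNat, pow_one, h.1, hV]
    push_cast
    field_simp
  | succ r hr ih =>
    obtain ⟨c, hc, hpow⟩ := ih (fun i hi => hb (i + 1) (by omega))
    obtain ⟨k, rfl⟩ := Nat.exists_eq_add_of_le' hr
    have hb0 : 0 < b 0 := hb 0 (by omega)
    set μ' := milnorNat (k + 1) (fun i => b (i + 1))
    refine ⟨(b 0 ^ μ' * c : ℚ)⁻¹, by positivity, fun X V hV h => ?_⟩
    have hV' := hpow (V 0 ^ b 0) (fun i => V (i + 1)) hV (h.tail hr)
    have hc0 : (c : ℂ) ≠ 0 := by exact_mod_cast hc.ne'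
    have hb0' : (b 0 : ℂ) ≠ 0 := by exact_mod_cast hb0.ne'
    have key : X ^ μ' = b 0 ^ μ' * c * V 0 ^ milnorNat (k + 2) b := by
      rw [milnorNat_succ_succ k hb0 (hb 1 (by omega)), h.1, pow_add, mul_pow, mul_pow, ← pow_mul',
        pow_mul, ← hV']
      simp only [Nat.add_sub_cancel]
      ring
    rw [Nat.add_sub_cancel, key]
    push_cast
    field_simp

/-- There is a positive rational `c_a` depending only on `a` such that
for all `t, s` and every `z` with `∂g_a^{t,s}/∂z_j(z) = 0` for `2 ≤ j ≤ n`, setting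
`y := g_a^{t,s}(z)`, one has `c_a (s + t z_1^{a_1})^{d(−a)} = (z_1 − y)^{μ(−a)}`. -/
theorem stmt_10 (n : ℕ) (hn : 2 ≤ n) (a : ℕ → ℕ) (ha : ∀ i < n, 2 ≤ a i) :
    ∃ c : ℚ, 0 < c ∧ ∀ t s : ℂ, ∀ z : ℕ → ℂ,
      (∀ j : ℕ, 1 ≤ j → j < n → pd (gMap n a t s) j z = 0) →
      (c : ℂ) * (s + t * z 0 ^ a 0) ^ (dd (n - 1) (fun i => a (i + 1)))
        = (z 0 - gMap n a t s z) ^ (muZ (n - 1) (fun i => a (i + 1))) := by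
  obtain ⟨m, hm⟩ : ∃ m, n - 1 = m + 1 := ⟨n - 2, by omega⟩
  set b : ℕ → ℕ := fun i => a (i + 1)
  have hb : ∀ i < m + 1, 0 < b i := fun i hi => by
    have := ha (i + 1) (by omega)
    simp only [b]
    omega
  obtain ⟨c, hc, hpow⟩ := exists_mul_pow_eq_pow_milnorNat (by omega : 0 < m + 1) hb
  have hd : dd (m + 1) b = milnorNat (m + 1) b + milnorNat m (fun i => b (i + 1)) :=
    (milnorNat_add_milnorNat m (hb 0 (by omega : 0 < m + 1))).symm
  have hd0 : 0 < dd (m + 1) b := prod_pos fun i hi => hb i (mem_range.mp hi)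
  set μ := milnorNat (m + 1) b
  refine ⟨μ ^ μ * c / dd (m + 1) b ^ μ,
    div_pos (mul_pos (by exact_mod_cast Nat.pow_self_pos) hc) (by exact_mod_cast pow_pos hd0 μ),
    fun t s z hz => ?_⟩
  set w := s + t * z 0 ^ a 0
  have hcrit := isChainCritical_of_pd_gMap_eq_zero hn a t s z hz
  rw [hm] at hcrit
  have hV := hpow w (chainVars n z) (by rw [chainVars, ← hm, update_self]) hcrit
  have hz0 : z 0 - gMap n a t s z = μ * (w * chainVars n z 0) / dd (m + 1) b := by
    rw [gMap_eq hn, hm, eq_div_iff (by exact_mod_cast hd0.ne')]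
    linear_combination hcrit.dd_mul_add_chainSum (by omega) hb
  rw [hm, hz0, ← milnorNat_eq_muZ (m + 1) hb, zpow_natCast, div_pow, mul_pow, mul_pow, ← hV, hd,
    pow_add]
  push_cast
  field_simp
  ring
end

section
/- Let n ≥ 2, let a = (a_1,…,a_n) be a tuple of integers with each a_i ≥ 2, and let t, s ∈ ℂ. Suppose z = (z_1,…,z_n) ∈ ℂ^n satisfies ∂g_a^{t,s}/∂z_j(z) = 0 for all j with 2 ≤ j ≤ n and s + t·z_1^{a_1} = 0. Then z_2 = z_3 = ⋯ = z_n = 0 and g_a^{t,s}(z) = z_1. Conversely, if s + t·z_1^{a_1} ≠ 0 and z satisfies the same system of equations, then z_j ≠ 0 for all j with 2 ≤ j ≤ n. -/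
/-!
Indices are 0-based, and `y := update z n 1` appends the coordinate `y n = 1`. For `1 ≤ k` and
`k + 1 < n` the equation `∂g/∂z_{k+1} = 0` reads
`y k ^ a k = a (k+1) * y (k+1) ^ (a (k+1) - 1) * y (k+2)`, and `∂g/∂z_1 = 0` reads
`s + t * z 0 ^ a 0 = a 1 * y 1 ^ (a 1 - 1) * y 2`. Read from the top down, these relations
propagate a zero coordinate to all earlier ones, and propagate nonvanishing from the pair
`(y (n-1), y n)` to all earlier coordinates. So either `y 1 = ⋯ = y (n-1) = 0`, which happens
exactly when `s + t * z 0 ^ a 0 = 0`, or none of them vanishes.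
-/

open scoped BigOperators

open Finset Function

/-- At `update z n 1`, the sum's term `i = n - 1` is the last term of the chain polynomial. -/
noncomputable def cappedChain (n : ℕ) (a : ℕ → ℕ) (y : ℕ → ℂ) : ℂ :=
  ∑ i ∈ Ico 1 n, (-1) ^ i * y i ^ a i * y (i + 1)

noncomputable def gCapped (n : ℕ) (a : ℕ → ℕ) (t s : ℂ) (y : ℕ → ℂ) : ℂ :=
  y 0 - (s + t * y 0 ^ a 0) * y 1 - cappedChain n a y

lemma chainP_eq_cappedChain {n : ℕ} (hn : 2 ≤ n) (a : ℕ → ℕ) (z : ℕ → ℂ) :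
    chainP (n - 1) (fun i => a (i + 1)) (fun i => z (i + 1)) = cappedChain n a (update z n 1) := by
  obtain ⟨m, rfl⟩ : ∃ m, n = m + 2 := ⟨n - 2, by omega⟩
  rw [chainP, cappedChain, sum_Ico_succ_top (by omega), sum_Ico_eq_sum_range]
  simp only [update_self, show m + 2 - 1 = m + 1 by omega, show m + 1 - 1 = m by omega]
  congr 1
  · refine sum_congr rfl fun k hk => ?_
    rw [mem_range] at hk
    rw [update_of_ne (by omega), update_of_ne (by omega), add_comm 1 k]
  · rw [update_of_ne (by omega), mul_one]

lemma gMap_eq_gCapped {n : ℕ} (hn : 2 ≤ n) (a : ℕ → ℕ) (t s : ℂ) (z : ℕ → ℂ) :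
    gMap n a t s z = gCapped n a t s (update z n 1) := by
  rw [gMap, gCapped, ← chainP_eq_cappedChain hn, update_of_ne (by omega : 0 ≠ n),
    update_of_ne (by omega : 1 ≠ n)]
  ring

lemma pd_comp_update {F : (ℕ → ℂ) → ℂ} {j n : ℕ} (h : j ≠ n) (c : ℂ) (z : ℕ → ℂ) :
    pd (fun y => F (update y n c)) j z = pd F j (update z n c) := by
  simp only [pd, update_comm h, update_of_ne h]

lemma hasDerivAt_update_apply_s12 {𝕜 ι : Type*} [NontriviallyNormedField 𝕜] [DecidableEq ι]
    (y : ι → 𝕜) (j k : ι) (w : 𝕜) :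
    HasDerivAt (fun v => update y j v k) ((Pi.single j 1 : ι → 𝕜) k) w := by
  rcases eq_or_ne k j with rfl | h
  · simpa using hasDerivAt_id' w
  · simpa [update_of_ne h, Pi.single_apply, h] using hasDerivAt_const w (y k)

lemma hasDerivAt_cappedChain (n : ℕ) (a : ℕ → ℕ) (y : ℕ → ℂ) {k : ℕ} (hk : k + 1 < n) :
    HasDerivAt (fun w => cappedChain n a (update y (k + 1) w))
      ((-1) ^ (k + 1) * (a (k + 1) * y (k + 1) ^ (a (k + 1) - 1) * y (k + 2))
        + if 1 ≤ k then (-1) ^ k * y k ^ a k else 0) (y (k + 1)) := by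
  show HasDerivAt (fun w => ∑ i ∈ Ico 1 n,
    (-1) ^ i * update y (k + 1) w i ^ a i * update y (k + 1) w (i + 1)) _ _
  refine (HasDerivAt.fun_sum fun i _ =>
    (((hasDerivAt_update_apply_s12 y (k + 1) i (y (k + 1))).fun_pow (a i)).const_mul
      ((-1 : ℂ) ^ i)).fun_mul
        (hasDerivAt_update_apply_s12 y (k + 1) (i + 1) (y (k + 1)))).congr_deriv ?_
  simp only [update_eq_self, Pi.single_apply, sum_add_distrib, mul_ite, ite_mul, mul_one, mul_zero,
    zero_mul, add_left_inj, sum_ite_eq', mem_Ico, show k < n by omega, and_true]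
  rw [if_pos (by omega)]
  ring

lemma hasDerivAt_gCapped (n : ℕ) (a : ℕ → ℕ) (t s : ℂ) (y : ℕ → ℂ) {k : ℕ} (hk : k + 1 < n) :
    HasDerivAt (fun w => gCapped n a t s (update y (k + 1) w))
      (-((s + t * y 0 ^ a 0) * (Pi.single (k + 1) 1 : ℕ → ℂ) 1)
        - ((-1) ^ (k + 1) * (a (k + 1) * y (k + 1) ^ (a (k + 1) - 1) * y (k + 2))
          + if 1 ≤ k then (-1) ^ k * y k ^ a k else 0)) (y (k + 1)) := by
  simp only [gCapped, update_of_ne (Nat.succ_ne_zero k).symm]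
  exact (((hasDerivAt_const _ _).fun_sub
    ((hasDerivAt_update_apply_s12 y (k + 1) 1 _).const_mul _)).fun_sub
      (hasDerivAt_cappedChain n a y hk)).congr_deriv (by rw [zero_sub])

lemma pd_gCapped_one {n : ℕ} (hn : 2 ≤ n) (a : ℕ → ℕ) (t s : ℂ) (y : ℕ → ℂ) :
    pd (gCapped n a t s) 1 y = a 1 * y 1 ^ (a 1 - 1) * y 2 - (s + t * y 0 ^ a 0) := by
  rw [pd, (hasDerivAt_gCapped n a t s y (k := 0) hn).deriv, if_neg (by omega), Pi.single_eq_same]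
  ring

lemma pd_gCapped_succ {n k : ℕ} (hk : 1 ≤ k) (hkn : k + 1 < n) (a : ℕ → ℕ) (t s : ℂ) (y : ℕ → ℂ) :
    pd (gCapped n a t s) (k + 1) y =
      (-1) ^ k * (a (k + 1) * y (k + 1) ^ (a (k + 1) - 1) * y (k + 2) - y k ^ a k) := by
  rw [pd, (hasDerivAt_gCapped n a t s y hkn).deriv, if_pos hk,
    Pi.single_apply, if_neg (by omega)]
  ring

lemma pd_gMap {n j : ℕ} (hn : 2 ≤ n) (hj : j < n) (a : ℕ → ℕ) (t s : ℂ) (z : ℕ → ℂ) :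
    pd (gMap n a t s) j z = pd (gCapped n a t s) j (update z n 1) := by
  rw [show gMap n a t s = fun z => gCapped n a t s (update z n 1) from
    funext (gMap_eq_gCapped hn a t s)]
  exact pd_comp_update hj.ne 1 z

def ChainCritical (n : ℕ) (b : ℕ → ℕ) (y : ℕ → ℂ) : Prop :=
  ∀ k, 1 ≤ k → k + 1 < n → y k ^ b k = b (k + 1) * y (k + 1) ^ (b (k + 1) - 1) * y (k + 2)

section ChainCritical

variable {n : ℕ} {b : ℕ → ℕ} {y : ℕ → ℂ}

lemma ChainCritical.eq_zero_of_le (hy : ChainCritical n b y) (hb : ∀ i, 1 ≤ i → i < n → 2 ≤ b i)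
    {j m : ℕ} (hj : y j = 0) (hjn : j < n) (hm : 1 ≤ m) (hmj : m ≤ j) : y m = 0 := by
  refine Nat.decreasingInduction' (P := fun k => y k = 0) (fun k hkj hmk hk => ?_) hmj hj
  have hbk := hb k (by omega) (by omega)
  have hbk' := hb (k + 1) (by omega) (by omega)
  rw [← pow_eq_zero_iff (by omega : b k ≠ 0), hy k (by omega) (by omega), hk,
    zero_pow (by omega : b (k + 1) - 1 ≠ 0), mul_zero, zero_mul]

lemma ChainCritical.ne_zero (hy : ChainCritical n b y) (hb : ∀ i, 1 ≤ i → i < n → 2 ≤ b i)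
    (hlast : y (n - 1) ≠ 0) (hcap : y n ≠ 0) {m : ℕ} (hm : 1 ≤ m) (hmn : m < n) :
    y m ≠ 0 ∧ y (m + 1) ≠ 0 := by
  refine Nat.decreasingInduction' (P := fun k => y k ≠ 0 ∧ y (k + 1) ≠ 0)
    (fun k hkn hmk ⟨hk1, hk2⟩ => ⟨fun hk => ?_, hk1⟩) (by omega : m ≤ n - 1)
    ⟨hlast, by rwa [Nat.sub_add_cancel (by omega)]⟩
  have hbk := hb k (by omega) (by omega)
  have hbk' := hb (k + 1) (by omega) (by omega)
  have hrel := hy k (by omega) (by omega)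
  rw [hk, zero_pow (by omega)] at hrel
  exact mul_ne_zero (mul_ne_zero (by exact_mod_cast (by omega : b (k + 1) ≠ 0))
    (pow_ne_zero _ hk1)) hk2 hrel.symm

end ChainCritical

lemma chainCritical_of_pd_gMap {n : ℕ} (hn : 2 ≤ n) {a : ℕ → ℕ} {t s : ℂ} {z : ℕ → ℂ}
    (hcrit : ∀ j, 2 ≤ j → j < n → pd (gMap n a t s) j z = 0) :
    ChainCritical n a (update z n 1) := by
  intro k hk hkn
  have h := hcrit (k + 1) (by omega) hkn
  rw [pd_gMap hn hkn, pd_gCapped_succ hk hkn, mul_eq_zero, sub_eq_zero] at h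
  exact (h.resolve_left (pow_ne_zero _ (neg_ne_zero.mpr one_ne_zero))).symm

lemma add_mul_pow_eq_of_pd_gMap_one {n : ℕ} (hn : 2 ≤ n) {a : ℕ → ℕ} {t s : ℂ} {z : ℕ → ℂ}
    (hcrit : pd (gMap n a t s) 1 z = 0) :
    s + t * z 0 ^ a 0 = a 1 * z 1 ^ (a 1 - 1) * update z n 1 2 := by
  rw [pd_gMap hn (by omega), pd_gCapped_one hn, sub_eq_zero, update_of_ne (by omega : 0 ≠ n),
    update_of_ne (by omega : 1 ≠ n)] at hcrit
  exact hcrit.symm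

lemma gMap_eq_of_eq_zero {n : ℕ} (hn : 2 ≤ n) {a : ℕ → ℕ} (ha : ∀ i, 1 ≤ i → i < n → a i ≠ 0)
    (t s : ℂ) {z : ℕ → ℂ} (hz : ∀ j, 1 ≤ j → j < n → z j = 0) : gMap n a t s z = z 0 := by
  have hyz : ∀ j, 1 ≤ j → j < n → update z n 1 j = 0 := fun j hj hjn =>
    (update_of_ne hjn.ne _ _).trans (hz j hj hjn)
  rw [gMap_eq_gCapped hn, gCapped, cappedChain, update_of_ne (by omega : 0 ≠ n),
    hyz 1 le_rfl (by omega), sum_eq_zero fun i hi => ?_]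
  · ring
  · rw [mem_Ico] at hi
    rw [hyz i hi.1 hi.2, zero_pow (ha i hi.1 hi.2), mul_zero, zero_mul]

/-- If `∂g_a^{t,s}/∂z_j(z) = 0` for `2 ≤ j ≤ n` and
`s + t z_1^{a_1} = 0`, then `z_2 = ⋯ = z_n = 0` and `g_a^{t,s}(z) = z_1`; conversely if
`s + t z_1^{a_1} ≠ 0` then all the coordinates `z_2, …, z_n` are nonzero. -/
theorem stmt_12 (n : ℕ) (hn : 2 ≤ n) (a : ℕ → ℕ) (ha : ∀ i < n, 2 ≤ a i)
    (t s : ℂ) (z : ℕ → ℂ)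
    (hcrit : ∀ j : ℕ, 1 ≤ j → j < n → pd (gMap n a t s) j z = 0) :
    (s + t * z 0 ^ a 0 = 0 →
      (∀ j : ℕ, 1 ≤ j → j < n → z j = 0) ∧ gMap n a t s z = z 0) ∧
    (s + t * z 0 ^ a 0 ≠ 0 →
      ∀ j : ℕ, 1 ≤ j → j < n → z j ≠ 0) := by
  have hyz : ∀ j < n, update z n 1 j = z j := fun j hj => update_of_ne hj.ne _ _
  have hb : ∀ i, 1 ≤ i → i < n → 2 ≤ a i := fun i _ hi => ha i hi
  have hy := chainCritical_of_pd_gMap hn fun j hj hjn => hcrit j (by omega) hjn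
  have hS := add_mul_pow_eq_of_pd_gMap_one hn (hcrit 1 le_rfl (by omega))
  have ha1 := ha 1 (by omega)
  refine ⟨fun hS0 => ?_, fun hS0 j hj hjn hzj => hS0 ?_⟩
  · have hlast : update z n 1 (n - 1) = 0 := by
      by_contra hlast
      obtain ⟨hz1, hz2⟩ := hy.ne_zero hb hlast (by simp) le_rfl (by omega)
      rw [hyz 1 (by omega)] at hz1
      exact mul_ne_zero (mul_ne_zero (by exact_mod_cast (by omega : a 1 ≠ 0))
        (pow_ne_zero _ hz1)) hz2 (hS ▸ hS0)
    have hzero : ∀ j, 1 ≤ j → j < n → z j = 0 := fun j hj hjn =>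
      hyz j hjn ▸ hy.eq_zero_of_le hb hlast (by omega) hj (by omega)
    exact ⟨hzero, gMap_eq_of_eq_zero hn (fun i _ hi => by have := ha i hi; omega) t s hzero⟩
  · have hz1 := hy.eq_zero_of_le hb ((hyz j hjn).trans hzj) hjn le_rfl hj
    rw [hS, ← hyz 1 (by omega), hz1, zero_pow (by omega), mul_zero, zero_mul]
end
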